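/- arXiv:1905.01805 — 6 statements merged into one kernel-verified Lean document; each statement's English description precedes it below -/
import Mathlib

section
/- Let S1, …, Sm be pairwise disjoint finite sets, none containing the element i, and let t = |S1 ∪ … ∪ Sm ∪ {i}|. Fix integers 0 ≤ s1 ≤ |S1|, …, 0 ≤ sm ≤ |Sm| and let u = s1 + … + sm. Then the probability that a uniformly random permutation of S1 ∪ … ∪ Sm ∪ {i} has element i preceded by exactly s1 elements of S1, …, and exactly sm elements of Sm equals (1/t) · C(t−1, u)⁻¹ · C(|S1|, s1) ⋯ C(|Sm|, sm). -/
set_option maxHeartbeats 1000000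
open Finset


theorem fiber_card {α : Type*} [Fintype α] [DecidableEq α] {t : ℕ} (ht : Fintype.card α = t)
    (i : α) (B : Finset α) (hiB : i ∉ B) {u : ℕ} (hu : B.card = u) (hut : u < t) :
    Fintype.card {π : α ≃ Fin t // (π i : ℕ) = u ∧ ∀ x, ((π x : ℕ) < u ↔ x ∈ B)} =
      u.factorial * (t - 1 - u).factorial := by
  classical
  set v := t - 1 - u with hv
  set C : Finset α := (univ \ B).erase i with hC
  have hmemC : ∀ x : α, x ∈ C ↔ (x ≠ i ∧ x ∉ B) := by
    intro x; simp [hC, and_comm]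
  have hCcard : C.card = v := by
    rw [hC, card_erase_of_mem (by simp [hiB]), card_sdiff_of_subset (subset_univ _), card_univ, ht, hu]
    omega
  have key : ∀ (π : α ≃ Fin t), (π i : ℕ) = u → (∀ x, ((π x : ℕ) < u ↔ x ∈ B)) →
      ∀ x : α, x ∈ C → u + 1 ≤ (π x : ℕ) ∧ (π x : ℕ) - (u+1) < v := by
    intro π hπi hπB x hx
    rw [hmemC] at hx
    have h1 : ¬ ((π x : ℕ) < u) := fun h => hx.2 ((hπB x).1 h)
    have h2 : (π x : ℕ) ≠ u := fun h =>
      hx.1 (π.injective (Fin.ext (by rw [h, hπi])))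
    have h3 : (π x : ℕ) < t := (π x).2
    omega
  set Ψ : {π : α ≃ Fin t // (π i : ℕ) = u ∧ ∀ x, ((π x : ℕ) < u ↔ x ∈ B)} →
      (↥B ≃ Fin u) × (↥C ≃ Fin v) := fun π =>
    (Equiv.ofBijective (fun x : ↥B => (⟨(π.1 x : ℕ), (π.2.2 x).2 x.2⟩ : Fin u))
      ((Fintype.bijective_iff_injective_and_card _).2
        ⟨fun a b hab => by
          have h0 := congrArg Fin.val hab
          exact Subtype.ext (π.1.injective (Fin.ext h0)),
         by simp [Fintype.card_coe, hu]⟩),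
     Equiv.ofBijective (fun x : ↥C =>
        (⟨(π.1 x : ℕ) - (u+1), (key π.1 π.2.1 π.2.2 x x.2).2⟩ : Fin v))
      ((Fintype.bijective_iff_injective_and_card _).2
        ⟨fun a b hab => by
          have h1 := (key π.1 π.2.1 π.2.2 a a.2).1
          have h2 := (key π.1 π.2.1 π.2.2 b b.2).1
          have h0 := congrArg Fin.val hab
          have hthis : ((π.1 a : Fin t) : ℕ) - (u+1) = ((π.1 b : Fin t) : ℕ) - (u+1) := h0
          exact Subtype.ext (π.1.injective (Fin.ext (by omega))),
         by simp [Fintype.card_coe, hCcard]⟩)) with hΨ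
  have hinj : Function.Injective Ψ := by
    rintro ⟨π, hπ⟩ ⟨π', hπ'⟩ h
    rw [Prod.ext_iff] at h
    apply Subtype.ext
    apply Equiv.ext
    intro x
    rcases eq_or_ne x i with heq | hxi
    · exact Fin.ext (show (π x : ℕ) = (π' x : ℕ) by rw [heq, hπ.1, hπ'.1])
    by_cases hxB : x ∈ B
    · have h0 := congrArg (fun e : ↥B ≃ Fin u => ((e (Subtype.mk x hxB)) : ℕ)) h.1
      have hthis : ((π x : Fin t) : ℕ) = ((π' x : Fin t) : ℕ) := h0
      exact Fin.ext (show (π x : ℕ) = (π' x : ℕ) from hthis)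
    · have hxC : x ∈ C := (hmemC x).2 ⟨hxi, hxB⟩
      have h0 := congrArg (fun e : ↥C ≃ Fin v => ((e (Subtype.mk x hxC)) : ℕ)) h.2
      have hval : ((π x : Fin t) : ℕ) - (u+1) = ((π' x : Fin t) : ℕ) - (u+1) := h0
      have k1 := (key π hπ.1 hπ.2 x hxC).1
      have k2 := (key π' hπ'.1 hπ'.2 x hxC).1
      exact Fin.ext (show (π x : ℕ) = (π' x : ℕ) by omega)
  have hsurj : Function.Surjective Ψ := by
    rintro ⟨f, g⟩
    have hfin : ∀ x : α, x ∉ B → x ≠ i → x ∈ C := fun x h1 h2 => (hmemC x).2 ⟨h2, h1⟩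
    set h : α → Fin t := fun x =>
      if hx : x ∈ B then ⟨(f (Subtype.mk x hx) : ℕ), lt_trans (f (Subtype.mk x hx)).2 hut⟩
      else if hxi : x = i then ⟨u, hut⟩
      else ⟨u + 1 + (g (Subtype.mk x (hfin x hx hxi)) : ℕ), by
        have := (g (Subtype.mk x (hfin x hx hxi))).2; omega⟩ with hh
    have hval : ∀ x (hx : x ∈ B), (h x : ℕ) = (f (Subtype.mk x hx) : ℕ) := by
      intro x hx; simp [hh, dif_pos hx]
    have hvali : (h i : ℕ) = u := by simp [hh, dif_neg hiB]
    have hvalC : ∀ x (hx : x ∈ C), (h x : ℕ) = u + 1 + (g (Subtype.mk x hx) : ℕ) := by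
      intro x hx
      obtain ⟨hxi, hxB⟩ := (hmemC x).1 hx
      simp [hh, dif_neg hxB, dif_neg hxi]
    have hinj' : Function.Injective h := by
      intro x y hxy
      have hxy' := congrArg Fin.val hxy
      by_cases hx : x ∈ B <;> by_cases hy : y ∈ B
      · rw [hval x hx, hval y hy] at hxy'
        exact congrArg Subtype.val (f.injective (Fin.ext hxy'))
      · rcases eq_or_ne y i with heq | hyi
        · rw [heq] at hxy'
          rw [hval x hx, hvali] at hxy'
          exact absurd hxy' (by have := (f (Subtype.mk x hx)).2; omega)
        · rw [hval x hx, hvalC y ((hmemC y).2 ⟨hyi, hy⟩)] at hxy'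
          exact absurd hxy' (by have := (f (Subtype.mk x hx)).2; omega)
      · rcases eq_or_ne x i with heq | hxi
        · rw [heq] at hxy'
          rw [hvali, hval y hy] at hxy'
          exact absurd hxy'.symm (by have := (f (Subtype.mk y hy)).2; omega)
        · rw [hvalC x ((hmemC x).2 ⟨hxi, hx⟩), hval y hy] at hxy'
          exact absurd hxy'.symm (by have := (f (Subtype.mk y hy)).2; omega)
      · rcases eq_or_ne x i with heqx | hxi <;> rcases eq_or_ne y i with heqy | hyi
        · rw [heqx, heqy]
        · rw [heqx] at hxy'
          rw [hvali, hvalC y ((hmemC y).2 ⟨hyi, hy⟩)] at hxy'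
          omega
        · rw [heqy] at hxy'
          rw [hvalC x ((hmemC x).2 ⟨hxi, hx⟩), hvali] at hxy'
          omega
        · have hxC := (hmemC x).2 ⟨hxi, hx⟩
          have hyC := (hmemC y).2 ⟨hyi, hy⟩
          rw [hvalC x hxC, hvalC y hyC] at hxy'
          have := g.injective (Fin.ext
            (show ((g (Subtype.mk x hxC) : Fin v) : ℕ) = ((g (Subtype.mk y hyC) : Fin v) : ℕ) by omega))
          exact congrArg Subtype.val this
    have hbij : Function.Bijective h :=
      (Fintype.bijective_iff_injective_and_card h).2 ⟨hinj', by simp [ht]⟩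
    set π : α ≃ Fin t := Equiv.ofBijective h hbij with hπdef
    have hπval : ∀ x, (π x : ℕ) = (h x : ℕ) := fun x => rfl
    have hcond1 : (π i : ℕ) = u := by rw [hπval, hvali]
    have hcond2 : ∀ x, ((π x : ℕ) < u ↔ x ∈ B) := by
      intro x
      by_cases hx : x ∈ B
      · simp only [hπval, hval x hx]
        exact ⟨fun _ => hx, fun _ => (f ⟨x, hx⟩).2⟩
      · rcases eq_or_ne x i with rfl | hxi
        · rw [hπval, hvali]; simp [hx]
        · rw [hπval, hvalC x ((hmemC x).2 ⟨hxi, hx⟩)]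
          simp only [hx, iff_false]
          omega
    refine ⟨⟨π, hcond1, hcond2⟩, ?_⟩
    rw [Prod.ext_iff]
    constructor
    · apply Equiv.ext
      rintro ⟨x, hx⟩
      apply Fin.ext
      show (π x : ℕ) = ((f (Subtype.mk x hx)) : ℕ)
      rw [hπval, hval x hx]
    · apply Equiv.ext
      rintro ⟨x, hx⟩
      apply Fin.ext
      show (π x : ℕ) - (u+1) = ((g (Subtype.mk x hx)) : ℕ)
      rw [hπval, hvalC x hx]
      omega
  have : Fintype.card {π : α ≃ Fin t // (π i : ℕ) = u ∧ ∀ x, ((π x : ℕ) < u ↔ x ∈ B)} =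
      Fintype.card ((↥B ≃ Fin u) × (↥C ≃ Fin v)) :=
    Fintype.card_of_bijective ⟨hinj, hsurj⟩
  rw [this, Fintype.card_prod,
    Fintype.card_equiv (Fintype.equivFinOfCardEq (by simp [Fintype.card_coe, hu])),
    Fintype.card_equiv (Fintype.equivFinOfCardEq (by simp [Fintype.card_coe, hCcard]))]
  simp [Fintype.card_coe, hu, hCcard]


theorem subset_count {α : Type*} [Fintype α] [DecidableEq α] (m : ℕ) (A : Fin m → Finset α)
    (i : α) (s : Fin m → ℕ)
    (hdisj : ∀ j k : Fin m, j ≠ k → Disjoint (A j) (A k))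
    (hi : ∀ j, i ∉ A j)
    (hcover : ∀ x : α, x = i ∨ ∃ j, x ∈ A j) :
    ((univ : Finset (Finset α)).filter
        (fun B => i ∉ B ∧ ∀ j, ((A j) ∩ B).card = s j)).card =
      ∏ j, (A j).card.choose (s j) := by
  classical
  have := Finset.card_bij (s := (univ : Finset (Finset α)).filter
        (fun B => i ∉ B ∧ ∀ j, ((A j) ∩ B).card = s j))
      (t := Fintype.piFinset fun j => ((A j).powersetCard (s j)))
      (fun B _ => fun j => A j ∩ B)
      (by
        intro B hB
        rw [mem_filter] at hB
        rw [Fintype.mem_piFinset]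
        intro j
        rw [mem_powersetCard]
        exact ⟨inter_subset_left, hB.2.2 j⟩)
      (by
        intro B hB B' hB' h
        rw [mem_filter] at hB hB'
        ext x
        rcases hcover x with rfl | ⟨j, hj⟩
        · simp [hB.2.1, hB'.2.1]
        · have hx : A j ∩ B = A j ∩ B' := congrFun h j
          constructor
          · intro hxB
            have h2 : x ∈ A j ∩ B' := hx ▸ (mem_inter.2 ⟨hj, hxB⟩)
            exact (mem_inter.1 h2).2
          · intro hxB
            have h2 : x ∈ A j ∩ B := hx.symm ▸ (mem_inter.2 ⟨hj, hxB⟩)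
            exact (mem_inter.1 h2).2)
      (by
        intro F hF
        rw [Fintype.mem_piFinset] at hF
        refine ⟨univ.biUnion F, ?_, ?_⟩
        · rw [mem_filter]
          refine ⟨mem_univ _, ?_, ?_⟩
          · intro hmem
            rw [mem_biUnion] at hmem
            obtain ⟨j, -, hj⟩ := hmem
            exact hi j ((mem_powersetCard.1 (hF j)).1 hj)
          · intro j
            have heq : A j ∩ univ.biUnion F = F j := by
              ext x
              rw [mem_inter, mem_biUnion]
              constructor
              · rintro ⟨hxA, k, -, hxF⟩
                rcases eq_or_ne k j with rfl | hkj
                · exact hxF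
                · exact absurd ((mem_powersetCard.1 (hF k)).1 hxF)
                    (Finset.disjoint_left.1 (hdisj j k (Ne.symm hkj)) hxA)
              · intro hxF
                exact ⟨(mem_powersetCard.1 (hF j)).1 hxF, j, mem_univ _, hxF⟩
            rw [heq, (mem_powersetCard.1 (hF j)).2]
        · funext j
          ext x
          rw [mem_inter, mem_biUnion]
          constructor
          · rintro ⟨hxA, k, -, hxF⟩
            rcases eq_or_ne k j with rfl | hkj
            · exact hxF
            · exact absurd ((mem_powersetCard.1 (hF k)).1 hxF)
                (Finset.disjoint_left.1 (hdisj j k (Ne.symm hkj)) hxA)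
          · intro hxF
            exact ⟨(mem_powersetCard.1 (hF j)).1 hxF, j, mem_univ _, hxF⟩)
  rw [this, Fintype.card_piFinset]
  congr 1
  funext j
  rw [card_powersetCard]

section aux
variable {α : Type*} [Fintype α] [DecidableEq α]

theorem count_filter_lt' {t : ℕ} (π : α ≃ Fin t) (k : Fin t) :
    (univ.filter fun x => π x < k).card = (k : ℕ) := by
  rw [← Finset.card_map ⟨π, π.injective⟩]
  have h : (univ.filter fun x => π x < k).map ⟨π, π.injective⟩
      = univ.filter fun y => y < k := by
    ext y
    simp only [Finset.mem_map, Finset.mem_filter, Finset.mem_univ, true_and,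
      Function.Embedding.coeFn_mk]
    constructor
    · rintro ⟨x, hx, rfl⟩; exact hx
    · intro hy; exact ⟨π.symm y, by simpa using hy⟩
  rw [h]
  have h2 : (univ.filter fun y : Fin t => y < k) = Finset.Iio k := by
    ext y; simp
  rw [h2, Fin.card_Iio]

theorem main_count (m : ℕ) (A : Fin m → Finset α)
    (i : α) (s : Fin m → ℕ)
    (hdisj : ∀ j k : Fin m, j ≠ k → Disjoint (A j) (A k))
    (hi : ∀ j, i ∉ A j)
    (hcover : ∀ x : α, x = i ∨ ∃ j, x ∈ A j)
    (hs : ∀ j, s j ≤ (A j).card)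
    {t : ℕ} (ht : Fintype.card α = t) {u : ℕ} (hu : ∑ j, s j = u) (hut : u < t) :
    Fintype.card {π : α ≃ Fin t //
        ∀ j, ((A j).filter (fun x => π x < π i)).card = s j} =
      (∏ j, (A j).card.choose (s j)) * (u.factorial * (t - 1 - u).factorial) := by
  classical
  set P : (α ≃ Fin t) → Prop :=
    fun π => ∀ j, ((A j).filter (fun x => π x < π i)).card = s j with hP
  set φ : (α ≃ Fin t) → Finset α := fun π => univ.filter fun x => π x < π i with hφ
  set Tfin : Finset (Finset α) :=
    univ.filter (fun B => i ∉ B ∧ ∀ j, ((A j) ∩ B).card = s j) with hTfin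
  have hinterφ : ∀ (π : α ≃ Fin t) j, A j ∩ φ π = (A j).filter (fun x => π x < π i) := by
    intro π j
    ext x
    simp [hφ, mem_inter, mem_filter]
  have hmap : ∀ π ∈ univ.filter P, φ π ∈ Tfin := by
    intro π hπ
    rw [mem_filter] at hπ
    rw [hTfin, mem_filter]
    refine ⟨mem_univ _, by simp [hφ], ?_⟩
    intro j
    rw [hinterφ]
    exact hπ.2 j
  rw [Fintype.card_subtype, Finset.card_eq_sum_card_fiberwise hmap]
  have hfiber : ∀ B ∈ Tfin,
      ((univ.filter P).filter (fun π => φ π = B)).card =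
        u.factorial * (t - 1 - u).factorial := by
    intro B hB
    rw [hTfin, mem_filter] at hB
    obtain ⟨-, hiB, hBint⟩ := hB
    have hBcard : B.card = u := by
      have hBeq : B = univ.biUnion (fun j => A j ∩ B) := by
        ext x
        rw [mem_biUnion]
        constructor
        · intro hx
          rcases hcover x with rfl | ⟨j, hj⟩
          · exact absurd hx hiB
          · exact ⟨j, mem_univ _, mem_inter.2 ⟨hj, hx⟩⟩
        · rintro ⟨j, -, hj⟩
          exact (mem_inter.1 hj).2
      rw [hBeq, card_biUnion]
      · rw [← hu]
        exact Finset.sum_congr rfl fun j _ => hBint j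
      · intro j _ k _ hjk
        exact Disjoint.mono inter_subset_left inter_subset_left (hdisj j k hjk)
    have hcondeq : (univ.filter P).filter (fun π => φ π = B) =
        univ.filter (fun π : α ≃ Fin t =>
          (π i : ℕ) = u ∧ ∀ x, ((π x : ℕ) < u ↔ x ∈ B)) := by
      ext π
      simp only [mem_filter, mem_univ, true_and]
      constructor
      · rintro ⟨hPπ, hφπ⟩
        have hπi : (π i : ℕ) = u := by
          have hcnt := count_filter_lt' π (π i)
          have hrfl : φ π = univ.filter fun x => π x < π i := rfl
          rw [← hrfl, hφπ, hBcard] at hcnt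
          omega
        refine ⟨hπi, ?_⟩
        intro x
        have : x ∈ B ↔ π x < π i := by
          rw [← hφπ]; simp [hφ]
        rw [this, Fin.lt_def, hπi]
      · rintro ⟨hπi, hπB⟩
        have hφB : φ π = B := by
          ext x
          simp only [hφ, mem_filter, mem_univ, true_and]
          rw [Fin.lt_def, hπi, hπB]
        refine ⟨?_, hφB⟩
        intro j
        rw [← hinterφ, hφB]
        exact hBint j
    rw [hcondeq, ← Fintype.card_subtype]
    exact fiber_card ht i B hiB hBcard hut
  rw [Finset.sum_congr rfl hfiber, Finset.sum_const, smul_eq_mul]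
  congr 1
  rw [hTfin]
  exact subset_count m A i s hdisj hi hcover
end aux

/-- Lemma 2: probability that, in a uniformly random linear ordering of
`S₁ ∪ ⋯ ∪ Sₘ ∪ {i}`, element `i` is preceded by exactly `s_j` elements of each `S_j`. -/
theorem stmt1 {α : Type*} [Fintype α] [DecidableEq α] (m : ℕ) (A : Fin m → Finset α)
    (i : α) (s : Fin m → ℕ)
    (hdisj : ∀ j k : Fin m, j ≠ k → Disjoint (A j) (A k))
    (hi : ∀ j, i ∉ A j)
    (hcover : ∀ x : α, x = i ∨ ∃ j, x ∈ A j)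
    (hs : ∀ j, s j ≤ (A j).card) :
    (Nat.card {π : α ≃ Fin (Fintype.card α) //
        ∀ j, ((A j).filter (fun x => π x < π i)).card = s j} : ℝ) /
      (Fintype.card α).factorial =
    (1 / (Fintype.card α : ℝ)) * ((Fintype.card α - 1).choose (∑ j, s j) : ℝ)⁻¹ *
      ∏ j, ((A j).card.choose (s j) : ℝ) := by
  classical
  have hne : (0:ℕ) < Fintype.card α := Fintype.card_pos_iff.2 ⟨i⟩
  have hsumA : 1 + ∑ j, (A j).card = Fintype.card α := by
    have huniv : (univ : Finset α) = insert i (univ.biUnion A) := by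
      ext x
      simp only [mem_univ, true_iff, mem_insert, mem_biUnion]
      rcases hcover x with rfl | ⟨j, hj⟩
      · left; rfl
      · right; exact ⟨j, trivial, hj⟩
    have hcc : Fintype.card α = (insert i (univ.biUnion A)).card := by
      rw [← huniv, card_univ]
    rw [card_insert_of_notMem (by
        simp only [mem_biUnion]
        rintro ⟨j, -, hj⟩
        exact hi j hj),
      card_biUnion (fun j _ k _ hjk => hdisj j k hjk)] at hcc
    omega
  have hule : ∑ j, s j ≤ Fintype.card α - 1 := by
    have := Finset.sum_le_sum (fun j (_ : j ∈ univ) => hs j)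
    omega
  have hut : ∑ j, s j < Fintype.card α := by omega
  have hcard := main_count m A i s hdisj hi hcover hs rfl rfl hut
  rw [Nat.card_eq_fintype_card, hcard]
  set u := ∑ j, s j with hudef
  set t := Fintype.card α with htdef
  have h1 : ((t-1).choose u) * u.factorial * (t-1-u).factorial = (t-1).factorial :=
    Nat.choose_mul_factorial_mul_factorial hule
  have h2 : t.factorial = t * (t-1).factorial := by
    conv_lhs => rw [show t = (t-1)+1 by omega]
    rw [Nat.factorial_succ]
    congr 2
    omega
  have hc0 : (((t-1).choose u : ℕ) : ℝ) ≠ 0 := Nat.cast_ne_zero.2 (Nat.choose_pos hule).ne'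
  have ht0 : (t:ℝ) ≠ 0 := Nat.cast_ne_zero.2 (by omega)
  have hf0 : (t.factorial : ℝ) ≠ 0 := Nat.cast_ne_zero.2 t.factorial_ne_zero
  have key : (t.factorial : ℝ) =
      (t : ℝ) * ((t-1).choose u : ℕ) * ((u.factorial : ℝ) * ((t-1-u).factorial : ℝ)) := by
    rw [h2]
    push_cast [← h1]
    ring
  push_cast
  rw [key]
  have hu0 : (u.factorial : ℝ) ≠ 0 := Nat.cast_ne_zero.2 u.factorial_ne_zero
  have hv0 : ((t-1-u).factorial : ℝ) ≠ 0 := Nat.cast_ne_zero.2 (t-1-u).factorial_ne_zero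
  field_simp
end

section
/- Let T ⊂ S be finite sets and let e ∈ S − T. Then for each v ∈ {0, 1, …, |T|}, equally many permutations of S have e preceded by exactly v elements of T; namely |S|!/(|T|+1) permutations for each value of v. -/
open Finset

section Aux

variable {α : Type*} [DecidableEq α] {n : ℕ}

lemma card_filter_gt (T : Finset α) (e : α) (he : e ∉ T) (π : α ≃ Fin n) :
    (T.filter fun x => π e < π x).card = T.card - (T.filter fun x => π x < π e).card := by
  have h1 : T.filter (fun x => π e < π x) = T.filter (fun x => ¬ (π x < π e)) := by
    apply Finset.filter_congr
    intro x hx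
    have hxe : π x ≠ π e := π.injective.ne (by rintro rfl; exact he hx)
    constructor
    · exact fun h => asymm h
    · exact fun h => lt_of_le_of_ne (not_lt.1 h) hxe.symm
  rw [h1, Finset.filter_not, Finset.card_sdiff_of_subset (Finset.filter_subset _ _)]

noncomputable def myFwd (T : Finset α) (e : α) (π : α ≃ Fin n)
    (h : (T.filter fun x => π e < π x).Nonempty) : α ≃ Fin n :=
  π.trans (Equiv.swap (π e) (((T.filter fun x => π e < π x).image π).min' (h.image π)))

noncomputable def myBwd (T : Finset α) (e : α) (π : α ≃ Fin n)
    (h : (T.filter fun x => π x < π e).Nonempty) : α ≃ Fin n :=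
  π.trans (Equiv.swap (π e) (((T.filter fun x => π x < π e).image π).max' (h.image π)))

lemma fwd_filter (T : Finset α) (e : α) (he : e ∉ T) (π : α ≃ Fin n)
    (h : (T.filter fun x => π e < π x).Nonempty) :
    T.filter (fun x => (myFwd T e π h) x < (myFwd T e π h) e)
      = insert (π.symm (((T.filter fun x => π e < π x).image π).min' (h.image π)))
          (T.filter fun x => π x < π e) := by
  set m := ((T.filter fun x => π e < π x).image π).min' (h.image π) with hmdef
  obtain ⟨y, hy, hπy⟩ := Finset.mem_image.1 (Finset.min'_mem _ (h.image π))
  rw [← hmdef] at hπy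
  have hyT : y ∈ T := (Finset.mem_filter.1 hy).1
  have hem : π e < m := by
    have := (Finset.mem_filter.1 hy).2; rwa [hπy] at this
  have hsymm : π.symm m = y := by rw [← hπy, Equiv.symm_apply_apply]
  have hmin : ∀ x ∈ T, π e < π x → m ≤ π x := fun x hx hlt =>
    Finset.min'_le _ _ (Finset.mem_image_of_mem _ (Finset.mem_filter.2 ⟨hx, hlt⟩))
  have hπ'e : (myFwd T e π h) e = m := by
    simp [myFwd, ← hmdef, Equiv.swap_apply_left]
  ext x
  simp only [Finset.mem_filter, Finset.mem_insert, hπ'e]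
  have hπ'x : ∀ x, (myFwd T e π h) x = Equiv.swap (π e) m (π x) := fun x => rfl
  constructor
  · rintro ⟨hxT, hlt⟩
    rw [hπ'x] at hlt
    have hxe : π x ≠ π e := π.injective.ne (by rintro rfl; exact he hxT)
    by_cases hxm : π x = m
    · left; rw [← hxm, Equiv.symm_apply_apply]
    · rw [Equiv.swap_apply_of_ne_of_ne hxe hxm] at hlt
      right
      refine ⟨hxT, ?_⟩
      by_contra hcon
      have : π e < π x := lt_of_le_of_ne (not_lt.1 hcon) hxe.symm
      exact absurd hlt (not_lt.2 (hmin x hxT this))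
  · rintro (rfl | ⟨hxT, hlt⟩)
    · refine ⟨hsymm ▸ hyT, ?_⟩
      rw [hπ'x, Equiv.apply_symm_apply, Equiv.swap_apply_right]
      exact hem
    · have hxe : π x ≠ π e := π.injective.ne (by rintro rfl; exact he hxT)
      have hxm : π x ≠ m := ne_of_lt (hlt.trans hem)
      refine ⟨hxT, ?_⟩
      rw [hπ'x, Equiv.swap_apply_of_ne_of_ne hxe hxm]
      exact hlt.trans hem

lemma bwd_filter (T : Finset α) (e : α) (he : e ∉ T) (π : α ≃ Fin n)
    (h : (T.filter fun x => π x < π e).Nonempty) :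
    T.filter (fun x => (myBwd T e π h) x < (myBwd T e π h) e)
      = (T.filter fun x => π x < π e).erase
          (π.symm (((T.filter fun x => π x < π e).image π).max' (h.image π))) := by
  set M := ((T.filter fun x => π x < π e).image π).max' (h.image π) with hMdef
  obtain ⟨y, hy, hπy⟩ := Finset.mem_image.1 (Finset.max'_mem _ (h.image π))
  rw [← hMdef] at hπy
  have hyT : y ∈ T := (Finset.mem_filter.1 hy).1
  have hMe : M < π e := by
    have := (Finset.mem_filter.1 hy).2; rwa [hπy] at this
  have hmax : ∀ x ∈ T, π x < π e → π x ≤ M := fun x hx hlt =>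
    Finset.le_max' _ _ (Finset.mem_image_of_mem _ (Finset.mem_filter.2 ⟨hx, hlt⟩))
  have hπ'e : (myBwd T e π h) e = M := by
    simp [myBwd, ← hMdef, Equiv.swap_apply_left]
  have hπ'x : ∀ x, (myBwd T e π h) x = Equiv.swap (π e) M (π x) := fun x => rfl
  ext x
  simp only [Finset.mem_filter, Finset.mem_erase, hπ'e]
  constructor
  · rintro ⟨hxT, hlt⟩
    rw [hπ'x] at hlt
    have hxe : π x ≠ π e := π.injective.ne (by rintro rfl; exact he hxT)
    have hxM : π x ≠ M := by
      rintro hxM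
      rw [hxM, Equiv.swap_apply_right] at hlt
      exact absurd hlt (not_lt.2 hMe.le)
    rw [Equiv.swap_apply_of_ne_of_ne hxe hxM] at hlt
    refine ⟨?_, hxT, hlt.trans hMe⟩
    intro hx
    exact hxM (by rw [hx, Equiv.apply_symm_apply])
  · rintro ⟨hne, hxT, hlt⟩
    have hxe : π x ≠ π e := π.injective.ne (by rintro rfl; exact he hxT)
    have hxM : π x ≠ M := fun hc => hne (by rw [← hc, Equiv.symm_apply_apply])
    refine ⟨hxT, ?_⟩
    rw [hπ'x, Equiv.swap_apply_of_ne_of_ne hxe hxM]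
    exact lt_of_le_of_ne (hmax x hxT hlt) hxM

lemma fwd_bwd (T : Finset α) (e : α) (he : e ∉ T) (π : α ≃ Fin n)
    (h : (T.filter fun x => π e < π x).Nonempty)
    (h' : (T.filter fun x => (myFwd T e π h) x < (myFwd T e π h) e).Nonempty) :
    myBwd T e (myFwd T e π h) h' = π := by
  set m := ((T.filter fun x => π e < π x).image π).min' (h.image π) with hmdef
  set π' := myFwd T e π h with hπ'def
  obtain ⟨y, hy, hπy⟩ := Finset.mem_image.1 (Finset.min'_mem _ (h.image π))
  rw [← hmdef] at hπy
  have hyT : y ∈ T := (Finset.mem_filter.1 hy).1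
  have hem : π e < m := by
    have := (Finset.mem_filter.1 hy).2; rwa [hπy] at this
  have hmin : ∀ x ∈ T, π e < π x → m ≤ π x := fun x hx hlt =>
    Finset.min'_le _ _ (Finset.mem_image_of_mem _ (Finset.mem_filter.2 ⟨hx, hlt⟩))
  have hπ'e : π' e = m := by simp [hπ'def, myFwd, ← hmdef, Equiv.swap_apply_left]
  have hπ'x : ∀ x, π' x = Equiv.swap (π e) m (π x) := fun x => rfl
  have hM : ((T.filter fun x => π' x < π' e).image π').max' (h'.image π') = π e := by
    apply le_antisymm
    · apply Finset.max'_le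
      intro b hb
      obtain ⟨x, hx, hbx⟩ := Finset.mem_image.1 hb
      obtain ⟨hxT, hlt⟩ := Finset.mem_filter.1 hx
      rw [← hbx, hπ'x]
      rw [hπ'x, hπ'e] at hlt
      have hxe : π x ≠ π e := π.injective.ne (by rintro rfl; exact he hxT)
      by_cases hxm : π x = m
      · rw [hxm, Equiv.swap_apply_right]
      · rw [Equiv.swap_apply_of_ne_of_ne hxe hxm] at hlt
        rw [Equiv.swap_apply_of_ne_of_ne hxe hxm]
        by_contra hcon
        have : π e < π x := not_le.1 hcon
        exact absurd hlt (not_lt.2 (hmin x hxT this))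
    · apply Finset.le_max'
      refine Finset.mem_image.2 ⟨y, ?_, ?_⟩
      · refine Finset.mem_filter.2 ⟨hyT, ?_⟩
        rw [hπ'x, hπ'e, hπy, Equiv.swap_apply_right]
        exact hem
      · rw [hπ'x, hπy, Equiv.swap_apply_right]
  rw [myBwd, hM, hπ'e]
  ext x
  simp only [Equiv.trans_apply]
  rw [hπ'x, Equiv.swap_comm m (π e), Equiv.swap_apply_self]

lemma bwd_fwd (T : Finset α) (e : α) (he : e ∉ T) (π : α ≃ Fin n)
    (h : (T.filter fun x => π x < π e).Nonempty)
    (h' : (T.filter fun x => (myBwd T e π h) e < (myBwd T e π h) x).Nonempty) :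
    myFwd T e (myBwd T e π h) h' = π := by
  set M := ((T.filter fun x => π x < π e).image π).max' (h.image π) with hMdef
  set π' := myBwd T e π h with hπ'def
  obtain ⟨y, hy, hπy⟩ := Finset.mem_image.1 (Finset.max'_mem _ (h.image π))
  rw [← hMdef] at hπy
  have hyT : y ∈ T := (Finset.mem_filter.1 hy).1
  have hMe : M < π e := by
    have := (Finset.mem_filter.1 hy).2; rwa [hπy] at this
  have hmax : ∀ x ∈ T, π x < π e → π x ≤ M := fun x hx hlt =>
    Finset.le_max' _ _ (Finset.mem_image_of_mem _ (Finset.mem_filter.2 ⟨hx, hlt⟩))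
  have hπ'e : π' e = M := by simp [hπ'def, myBwd, ← hMdef, Equiv.swap_apply_left]
  have hπ'x : ∀ x, π' x = Equiv.swap (π e) M (π x) := fun x => rfl
  have hm : ((T.filter fun x => π' e < π' x).image π').min' (h'.image π') = π e := by
    apply le_antisymm
    · apply Finset.min'_le
      refine Finset.mem_image.2 ⟨y, ?_, ?_⟩
      · refine Finset.mem_filter.2 ⟨hyT, ?_⟩
        simp only [hπ'x, Equiv.swap_apply_left]
        rw [hπy, Equiv.swap_apply_right]
        exact hMe
      · rw [hπ'x, hπy, Equiv.swap_apply_right]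
    · apply Finset.le_min'
      intro b hb
      obtain ⟨x, hx, hbx⟩ := Finset.mem_image.1 hb
      obtain ⟨hxT, hlt⟩ := Finset.mem_filter.1 hx
      simp only [hπ'x, Equiv.swap_apply_left] at hlt
      rw [← hbx, hπ'x]
      have hxe : π x ≠ π e := π.injective.ne (by rintro rfl; exact he hxT)
      by_cases hxM : π x = M
      · rw [hxM, Equiv.swap_apply_right]
      · rw [Equiv.swap_apply_of_ne_of_ne hxe hxM] at hlt
        rw [Equiv.swap_apply_of_ne_of_ne hxe hxM]
        by_contra hcon
        have : π x < π e := not_le.1 hcon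
        exact absurd hlt (not_lt.2 (hmax x hxT this))
  rw [myFwd, hm, hπ'e]
  ext x
  simp only [Equiv.trans_apply]
  rw [hπ'x, Equiv.swap_comm M (π e), Equiv.swap_apply_self]

end Aux

lemma step_card {α : Type*} [Fintype α] [DecidableEq α] (T : Finset α) (e : α)
    (he : e ∉ T) {v : ℕ} (hv : v < T.card) :
    Nat.card {π : α ≃ Fin (Fintype.card α) // (T.filter (fun x => π x < π e)).card = v}
      = Nat.card {π : α ≃ Fin (Fintype.card α) //
          (T.filter (fun x => π x < π e)).card = v + 1} := by
  apply Nat.card_congr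
  have hne1 : ∀ (π : α ≃ Fin (Fintype.card α)), (T.filter fun x => π x < π e).card = v →
      (T.filter fun x => π e < π x).Nonempty := by
    intro π hπ
    rw [← Finset.card_pos, card_filter_gt T e he π, hπ]
    omega
  have hne2 : ∀ (π : α ≃ Fin (Fintype.card α)), (T.filter fun x => π x < π e).card = v + 1 →
      (T.filter fun x => π x < π e).Nonempty := by
    intro π hπ
    rw [← Finset.card_pos, hπ]; omega
  refine
    { toFun := fun p => ⟨myFwd T e p.1 (hne1 p.1 p.2), ?_⟩
      invFun := fun p => ⟨myBwd T e p.1 (hne2 p.1 p.2), ?_⟩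
      left_inv := ?_
      right_inv := ?_ }
  · rw [fwd_filter T e he p.1 (hne1 p.1 p.2), Finset.card_insert_of_notMem, p.2]
    intro hmem
    have h1 := (Finset.mem_filter.1 hmem).2
    rw [Equiv.apply_symm_apply] at h1
    obtain ⟨y, hy, hπy⟩ := Finset.mem_image.1
      (Finset.min'_mem _ ((hne1 p.1 p.2).image p.1))
    have h2 : p.1 e < p.1 y := (Finset.mem_filter.1 hy).2
    rw [hπy] at h2
    exact absurd h1 (not_lt.2 h2.le)
  · have hmem : p.1.symm (((T.filter fun x => p.1 x < p.1 e).image p.1).max'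
        ((hne2 p.1 p.2).image p.1)) ∈ T.filter fun x => p.1 x < p.1 e := by
      obtain ⟨y, hy, hπy⟩ := Finset.mem_image.1
        (Finset.max'_mem _ ((hne2 p.1 p.2).image p.1))
      rw [← hπy, Equiv.symm_apply_apply]
      exact hy
    rw [bwd_filter T e he p.1 (hne2 p.1 p.2), Finset.card_erase_of_mem hmem, p.2]
    omega
  · intro p
    apply Subtype.ext
    apply fwd_bwd T e he p.1 (hne1 p.1 p.2)
    rw [fwd_filter T e he p.1 (hne1 p.1 p.2)]
    exact Finset.insert_nonempty _ _
  · intro p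
    apply Subtype.ext
    apply bwd_fwd T e he p.1 (hne2 p.1 p.2)
    have hmem : p.1.symm (((T.filter fun x => p.1 x < p.1 e).image p.1).max'
        ((hne2 p.1 p.2).image p.1)) ∈ T.filter fun x => p.1 x < p.1 e := by
      obtain ⟨y, hy, hπy⟩ := Finset.mem_image.1
        (Finset.max'_mem _ ((hne2 p.1 p.2).image p.1))
      rw [← hπy, Equiv.symm_apply_apply]
      exact hy
    rw [← Finset.card_pos, card_filter_gt T e he, bwd_filter T e he p.1 (hne2 p.1 p.2),
      Finset.card_erase_of_mem hmem, p.2]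
    omega

/-- Lemma 3: for `T ⊂ S` (here `S` is the whole finite type) and `e ∈ S − T`,
for each `v ∈ {0, …, |T|}`, exactly `|S|!/(|T|+1)` permutations of `S` have `e`
preceded by exactly `v` elements of `T`. -/
theorem stmt3 {α : Type*} [Fintype α] [DecidableEq α] (T : Finset α) (e : α)
    (he : e ∉ T) (v : ℕ) (hv : v ≤ T.card) :
    Nat.card {π : α ≃ Fin (Fintype.card α) //
      (T.filter (fun x => π x < π e)).card = v} =
      (Fintype.card α).factorial / (T.card + 1) := by
  classical
  have hconst : ∀ w : ℕ, w ≤ T.card →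
      Nat.card {π : α ≃ Fin (Fintype.card α) // (T.filter (fun x => π x < π e)).card = w}
        = Nat.card {π : α ≃ Fin (Fintype.card α) //
            (T.filter (fun x => π x < π e)).card = 0} := by
    intro w
    induction w with
    | zero => intro _; rfl
    | succ k ih =>
      intro hk
      rw [← step_card T e he (by omega : k < T.card)]
      exact ih (by omega)
  set c := Nat.card {π : α ≃ Fin (Fintype.card α) //
      (T.filter (fun x => π x < π e)).card = 0} with hc
  have hsum : ∑ b : Fin (T.card + 1),
      Nat.card {π : α ≃ Fin (Fintype.card α) //
        (T.filter (fun x => π x < π e)).card = (b : ℕ)}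
        = (Fintype.card α).factorial := by
    let f : (α ≃ Fin (Fintype.card α)) → Fin (T.card + 1) := fun π =>
      ⟨(T.filter (fun x => π x < π e)).card,
        Nat.lt_succ_of_le (Finset.card_le_card (Finset.filter_subset _ _))⟩
    calc ∑ b : Fin (T.card + 1),
        Nat.card {π : α ≃ Fin (Fintype.card α) //
          (T.filter (fun x => π x < π e)).card = (b : ℕ)}
        = ∑ b : Fin (T.card + 1), Fintype.card {π // f π = b} := by
          refine Finset.sum_congr rfl fun b _ => ?_
          rw [Nat.card_eq_fintype_card]
          exact Fintype.card_congr (Equiv.subtypeEquivRight fun π => by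
            simp [f, Fin.ext_iff])
      _ = Fintype.card (α ≃ Fin (Fintype.card α)) := by
          rw [← Fintype.card_sigma]
          exact Fintype.card_congr (Equiv.sigmaFiberEquiv f)
      _ = (Fintype.card α).factorial := Fintype.card_equiv (Fintype.equivFin α)
  have hconst' : ∀ b : Fin (T.card + 1),
      Nat.card {π : α ≃ Fin (Fintype.card α) //
        (T.filter (fun x => π x < π e)).card = (b : ℕ)} = c :=
    fun b => hconst (b : ℕ) (Nat.lt_succ_iff.1 b.2)
  have htot : (T.card + 1) * c = (Fintype.card α).factorial := by
    rw [← hsum]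
    simp only [hconst']
    rw [Finset.sum_const, Finset.card_univ, Fintype.card_fin, smul_eq_mul]
  rw [hconst v hv, ← htot, Nat.mul_div_cancel_left _ (Nat.succ_pos _)]
end

section
/- Let C1, …, C_{j−1}, C_j, C_m be distinct items and consider a uniformly random permutation of all m items. Conditioned on the event that exactly s of the items C1, …, C_{j−1} precede C_m, the probability that C_j also precedes C_m equals (s+1)/(j+1). -/
/-!
Write `T = {C₁, …, C_{j-1}}`, `a = C_j`, `z = C_m` and `X = T ∪ {a}`. Multiplying on the right by
a transposition is a bijection of the permutations. Swapping `z` with another item of `X ∪ {z}`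
therefore shows that the number of items of `X` before `z` is uniform on `0, …, j`, since each rank
is taken by exactly one item of `X ∪ {z}`. Swapping `a` with another item of `X` shows that, given
that `k` items of `X` precede `z`, the item `a` is among them with probability `k / j`. Having `s`
items of `T` before `z` means having `s + 1` items of `X` before `z` with `a` among them, or `s`
with `a` not among them. These are the fractions `(s + 1) / j` and `(j - s) / j` of two rank
classes of equal mass, so the conditional probability is `(s + 1) / (s + 1 + j - s)`.
-/

open Finset Equiv

namespace Finset

lemma card_mul_card_filter_eq_sum_card_filter {α β : Type*} [Fintype β] (S : Finset α)
    (P : β → α → Prop) [∀ b x, Decidable (P b x)] {x₀ : α}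
    (h : ∀ x ∈ S, #{b | P b x} = #{b | P b x₀}) :
    #S * #{b | P b x₀} = ∑ b, #{x ∈ S | P b x} := by
  rw [← sum_const_nat h]
  simp only [card_filter]
  exact sum_comm

end Finset

lemma Equiv.swap_apply_mem_iff {α : Type*} [DecidableEq α] {Y : Finset α} {x y : α} (hx : x ∈ Y)
    (hy : y ∈ Y) {c : α} : swap x y c ∈ Y ↔ c ∈ Y := by
  rw [swap_apply_def]
  split_ifs with h₁ h₂ <;> simp_all

namespace Equiv.Perm

variable {α : Type*} [LinearOrder α]

def rankIn (π : Perm α) (Y : Finset α) (y : α) : ℕ := #{c ∈ Y | π c < π y}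

lemma rankIn_lt_rankIn {π : Perm α} {Y : Finset α} {y y' : α} (hy : y ∈ Y) (h : π y < π y') :
    rankIn π Y y < rankIn π Y y' := by
  refine card_lt_card ⟨fun c hc => ?_, fun hsub => ?_⟩
  · simp only [mem_filter] at hc ⊢
    exact ⟨hc.1, hc.2.trans h⟩
  · simpa using (mem_filter.1 (hsub (mem_filter.2 ⟨hy, h⟩))).2

lemma rankIn_lt_card (π : Perm α) {Y : Finset α} {y : α} (hy : y ∈ Y) : rankIn π Y y < #Y :=
  card_lt_card <| filter_ssubset.2 ⟨y, hy, lt_irrefl _⟩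

lemma rankIn_injOn (π : Perm α) (Y : Finset α) : Set.InjOn (rankIn π Y) Y := by
  intro y hy y' hy' h
  by_contra hne
  rcases lt_or_gt_of_ne (π.injective.ne hne) with hlt | hlt
  · exact (rankIn_lt_rankIn hy hlt).ne h
  · exact (rankIn_lt_rankIn hy' hlt).ne' h

lemma image_rankIn (π : Perm α) (Y : Finset α) : Y.image (rankIn π Y) = range #Y := by
  refine eq_of_subset_of_card_le (fun k hk => ?_) ?_
  · obtain ⟨y, hy, rfl⟩ := mem_image.1 hk
    exact mem_range.2 (rankIn_lt_card π hy)
  · rw [card_image_of_injOn (rankIn_injOn π Y), card_range]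

lemma card_filter_rankIn_eq_one (π : Perm α) {Y : Finset α} {k : ℕ} (hk : k < #Y) :
    #{y ∈ Y | rankIn π Y y = k} = 1 := by
  obtain ⟨y, hy, rfl⟩ := mem_image.1 ((image_rankIn π Y).symm ▸ mem_range.2 hk)
  refine card_eq_one.2 ⟨y, eq_singleton_iff_unique_mem.2 ⟨mem_filter.2 ⟨hy, rfl⟩, ?_⟩⟩
  intro y' hy'
  obtain ⟨hy'Y, h⟩ := mem_filter.1 hy'
  exact rankIn_injOn π Y hy'Y hy h

variable [DecidableEq α]

lemma rankIn_insert_of_notMem {π : Perm α} {Y : Finset α} {a : α} (ha : a ∉ Y) (w : α) :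
    rankIn π (insert a Y) w = rankIn π Y w + if π a < π w then 1 else 0 := by
  unfold rankIn
  rw [filter_insert]
  split_ifs with h
  · rw [card_insert_of_notMem (fun h' => ha (mem_filter.1 h').1)]
  · rfl

lemma rankIn_insert_self {π : Perm α} {Y : Finset α} {z : α} (hz : z ∉ Y) :
    rankIn π (insert z Y) z = rankIn π Y z := by
  simp [rankIn_insert_of_notMem hz]

lemma rankIn_mul_swap {Y : Finset α} {x y : α} (hx : x ∈ Y) (hy : y ∈ Y) (π : Perm α) (w : α) :
    rankIn (π * swap x y) Y w = rankIn π Y (swap x y w) := by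
  refine card_equiv (swap x y) fun c => ?_
  rw [mem_filter, mem_filter, swap_apply_mem_iff hx hy]
  rfl

variable [Fintype α]

lemma card_mul_card_rankIn_eq_factorial {Y : Finset α} {y : α} (hy : y ∈ Y) {k : ℕ}
    (hk : k < #Y) : #Y * #{π : Perm α | rankIn π Y y = k} = (Fintype.card α).factorial := by
  rw [card_mul_card_filter_eq_sum_card_filter Y (fun π x => rankIn π Y x = k) fun x hx => ?_]
  · simp [card_filter_rankIn_eq_one _ hk, Fintype.card_perm]
  · refine card_equiv (Equiv.mulRight (swap x y)) fun π => ?_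
    simp [rankIn_mul_swap hx hy]

lemma card_mul_card_rankIn_and_lt {X : Finset α} {a z : α} (ha : a ∈ X) (hz : z ∉ X) (k : ℕ) :
    #X * #{π : Perm α | rankIn π X z = k ∧ π a < π z} = k * #{π : Perm α | rankIn π X z = k} := by
  rw [card_mul_card_filter_eq_sum_card_filter X (fun π x => rankIn π X z = k ∧ π x < π z)
    fun x hx => ?_]
  · rw [card_filter, mul_sum]
    refine sum_congr rfl fun π _ => ?_
    split_ifs with h
    · simp only [h, true_and, mul_one]
      exact h
    · simp [h]
  · have hzx : z ≠ x := fun h => hz (h ▸ hx)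
    have hza : z ≠ a := fun h => hz (h ▸ ha)
    refine card_equiv (Equiv.mulRight (swap x a)) fun π => ?_
    simp [rankIn_mul_swap hx ha, swap_apply_of_ne_of_ne hzx hza]

lemma card_mul_card_rankIn_eq_factorial_of_notMem {X : Finset α} {z : α} (hz : z ∉ X) {k : ℕ}
    (hk : k ≤ #X) : (#X + 1) * #{π : Perm α | rankIn π X z = k} = (Fintype.card α).factorial := by
  simpa [rankIn_insert_self hz, card_insert_of_notMem hz] using
    card_mul_card_rankIn_eq_factorial (mem_insert_self z X) (k := k)
      (by rw [card_insert_of_notMem hz]; omega)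

theorem card_rankIn_and_lt_div_card_rankIn {T : Finset α} {a z : α} (ha : a ∉ T)
    (hz : z ∉ insert a T) {s : ℕ} (hs : s ≤ #T) :
    (#{π : Perm α | rankIn π T z = s ∧ π a < π z} : ℝ) / #{π : Perm α | rankIn π T z = s} =
      (s + 1) / (#T + 2) := by
  set X := insert a T
  have hX : #X = #T + 1 := card_insert_of_notMem ha
  have hrank (π : Perm α) := rankIn_insert_of_notMem (π := π) ha z
  have hnum : #{π : Perm α | rankIn π T z = s ∧ π a < π z} =
      #{π : Perm α | rankIn π X z = s + 1 ∧ π a < π z} := by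
    congr 1; refine filter_congr fun π _ => ?_; rw [hrank]; split_ifs <;> simp [*]
  have hden : #{π : Perm α | rankIn π T z = s} =
      #{π : Perm α | rankIn π X z = s + 1 ∧ π a < π z} +
        #{π : Perm α | rankIn π X z = s ∧ ¬ π a < π z} := by
    rw [← hnum, ← card_filter_add_card_filter_not (fun π => π a < π z), filter_filter,
      filter_filter]
    congr 2; refine filter_congr fun π _ => ?_; rw [hrank]; split_ifs <;> simp [*]
  have hsplit : #{π : Perm α | rankIn π X z = s} =
      #{π : Perm α | rankIn π X z = s ∧ π a < π z} +
        #{π : Perm α | rankIn π X z = s ∧ ¬ π a < π z} := by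
    rw [← card_filter_add_card_filter_not (fun π => π a < π z), filter_filter, filter_filter]
  have hM₀ := card_mul_card_rankIn_eq_factorial_of_notMem hz (k := s) (by omega)
  have hM₁ := card_mul_card_rankIn_eq_factorial_of_notMem hz (k := s + 1) (by omega)
  have hP₀ := card_mul_card_rankIn_and_lt (mem_insert_self a T) hz s
  have hP₁ := card_mul_card_rankIn_and_lt (mem_insert_self a T) hz (s + 1)
  have hfact := (Fintype.card α).factorial_pos
  rw [hden, hnum]
  rw [hX] at hM₀ hM₁ hP₀ hP₁
  set P₁ := #{π : Perm α | rankIn π X z = s + 1 ∧ π a < π z}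
  set P₀ := #{π : Perm α | rankIn π X z = s ∧ π a < π z}
  set Q₀ := #{π : Perm α | rankIn π X z = s ∧ ¬ π a < π z}
  set M₀ := #{π : Perm α | rankIn π X z = s}
  set M₁ := #{π : Perm α | rankIn π X z = s + 1}
  have hM : M₁ = M₀ := Nat.eq_of_mul_eq_mul_left (by omega) (hM₁.trans hM₀.symm)
  have hM₁pos : 0 < M₁ := Nat.pos_of_ne_zero fun h => by simp [h] at hM₁; omega
  have hP₁pos : 0 < P₁ := Nat.pos_of_ne_zero fun h => by simp [h] at hP₁; omega
  rw [div_eq_div_iff (by positivity) (by positivity)]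
  refine mul_left_cancel₀ (b := (P₁ : ℝ) * (#T + 2)) (Nat.cast_add_one_ne_zero #T) ?_
  -- With `M = M₀ = M₁` and `j = #T + 1`: `j * P₁ = (s + 1) * M` and `j * (P₁ + Q₀) = (j + 1) * M`.
  rify at hsplit hM hP₀ hP₁
  push_cast
  linear_combination (#T + 1 - s) * hP₁ + ((#T : ℝ) + 1 - s) * (s + 1) * hM
    + (s + 1) * (#T + 1) * hsplit + (s + 1) * hP₀

end Equiv.Perm

/-- Conditioned on exactly `s` of the items `C_1, …, C_{j−1}` (indices `0, …, j−2`)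
preceding `C_m` (index `m−1`) in a uniformly random permutation of `m` items, the
probability that `C_j` (index `j−1`) also precedes `C_m` equals `(s+1)/(j+1)`. -/
theorem stmt7 (m j s : ℕ) (hj : 1 ≤ j) (hjm : j ≤ m - 1) (hs : s ≤ j - 1) :
    (Nat.card {π : Equiv.Perm (Fin m) //
        (Finset.univ.filter
          (fun c : Fin m => (c : ℕ) < j - 1 ∧ π c < π ⟨m - 1, by omega⟩)).card = s ∧
        π ⟨j - 1, by omega⟩ < π ⟨m - 1, by omega⟩} : ℝ) /
      (Nat.card {π : Equiv.Perm (Fin m) //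
        (Finset.univ.filter
          (fun c : Fin m => (c : ℕ) < j - 1 ∧ π c < π ⟨m - 1, by omega⟩)).card = s} : ℝ) =
    ((s : ℝ) + 1) / ((j : ℝ) + 1) := by
  set z : Fin m := ⟨m - 1, by omega⟩
  set a : Fin m := ⟨j - 1, by omega⟩
  set T : Finset (Fin m) := {c | (c : ℕ) < j - 1}
  have hcount (π : Perm (Fin m)) :
      #{c : Fin m | (c : ℕ) < j - 1 ∧ π c < π z} = π.rankIn T z := by
    rw [Perm.rankIn, filter_filter]
  have hT : #T = j - 1 := by rw [Fin.card_filter_val_lt]; omega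
  have ha : a ∉ T := by simp [T, a]
  have hz : z ∉ insert a T := by simp [T, a, z, Fin.ext_iff]; omega
  simp only [Nat.card_eq_fintype_card, Fintype.card_subtype, hcount]
  rw [Perm.card_rankIn_and_lt_div_card_rankIn ha hz (by omega), hT, Nat.cast_sub hj]
  ring
end

section
/- Let n in-sample examples each carry a binary label, with |A| of them (excluding a fixed example i) having label y. Let k be odd, let v_n, v_c, v_w be real values, and define v(S) = v_n if |S| < k; otherwise v(S) is determined by a majority vote. Then the contribution to the Shapley value of example i from being the k-th element of a permutation equals (1/n) C(n−1, k−1)⁻¹ [ Σ_{a=0}^{(k−1)/2 − I(y_i = y)} C(|A|, a) C(n−1−|A|, k−1−a) v_w + Σ_{a=(k−1)/2 − I(y_i=y)+1}^{k−1} C(|A|, a) C(n−1−|A|, k−1−a) v_c ] − v_n/n. Formally: the expectation over uniformly random permutations σ of the n examples, restricted to the event that i is in position k, of (v(S_i(σ) ∪ {i}) − v_n) · P(i in position k), equals the stated expression. -/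
/-!
Conditioned on `π i = k - 1`, the set of examples preceding `i` is a uniformly random
`(k - 1)`-subset `U` of the other `n - 1` examples: a permutation with prescribed blocks
"before `i`", "`i`", "after `i`" is a choice of a bijection on each block, so every `U` arises
from exactly `(k - 1)! (n - k)!` permutations, and `(k - 1)! (n - k)! / n! = 1 / (n C(n-1, k-1))`.
Grouping the subsets `U` by `a = |U ∩ A|`, of which there are `C(|A|, a) C(n - 1 - |A|, k - 1 - a)`,
gives the sum; for odd `k` the strict majority `k < 2 (a + I(y_i = y))` means
`a + I(y_i = y) > (k - 1) / 2`.
-/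

open Finset

def Equiv.fiberwiseEquivEquivPi {α β ι : Type*} (f : α → ι) (g : β → ι) :
    {e : α ≃ β // ∀ a, g (e a) = f a} ≃ ∀ c, {a // f a = c} ≃ {b // g b = c} where
  toFun e c := e.1.subtypeEquiv fun a => by rw [e.2 a]
  invFun E := ⟨Equiv.ofFiberEquiv E, Equiv.ofFiberEquiv_map E⟩
  left_inv e := by ext a; simp [Equiv.ofFiberEquiv]
  right_inv E := by funext c; ext ⟨a, rfl⟩; rfl

theorem Fintype.card_equiv_comp_eq {α β ι : Type*} [Fintype α] [Fintype β] [DecidableEq α]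
    [DecidableEq β] [Fintype ι] [DecidableEq ι] {f : α → ι} {g : β → ι}
    (h : ∀ c, Fintype.card {a // f a = c} = Fintype.card {b // g b = c}) :
    Fintype.card {e : α ≃ β // ∀ a, g (e a) = f a} =
      ∏ c, (Fintype.card {a // f a = c}).factorial := by
  rw [Fintype.card_congr (Equiv.fiberwiseEquivEquivPi f g), Fintype.card_pi]
  exact Finset.prod_congr rfl fun c _ => Fintype.card_equiv (Fintype.equivOfCardEq (h c))

theorem Ordering.prod_univ {M : Type*} [CommMonoid M] (f : Ordering → M) :
    ∏ c, f c = f .lt * f .eq * f .gt := by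
  rw [show (univ : Finset Ordering) = {.lt, .eq, .gt} from rfl]
  simp [mul_assoc]

theorem Nat.cast_factorial_mul_factorial_div_factorial {K : Type*} [Field K] [CharZero K]
    {n j : ℕ} (hj : j < n) :
    ((j.factorial * (n - 1 - j).factorial : ℕ) : K) / n.factorial =
      1 / (n : K) * ((n - 1).choose j : K)⁻¹ := by
  have hn : n ≠ 0 := by omega
  rw [← Nat.mul_factorial_pred hn, ← Nat.choose_mul_factorial_mul_factorial (by omega : j ≤ n - 1)]
  have : ((n - 1).choose j : K) ≠ 0 := by exact_mod_cast (Nat.choose_pos (by omega)).ne'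
  have : (n : K) ≠ 0 := by exact_mod_cast hn
  have : (j.factorial : K) ≠ 0 := Nat.cast_ne_zero.mpr j.factorial_ne_zero
  have : ((n - 1 - j).factorial : K) ≠ 0 := Nat.cast_ne_zero.mpr (n - 1 - j).factorial_ne_zero
  push_cast
  field_simp

theorem Nat.lt_two_mul_iff_not_le_div_two {k : ℕ} (hk : Odd k) (s : ℕ) :
    k < 2 * s ↔ ¬ s ≤ (k - 1) / 2 := by
  obtain ⟨t, rfl⟩ := hk
  omega

section Positions

variable {α : Type*} [Fintype α]

theorem card_filter_apply_lt (π : α ≃ Fin (Fintype.card α)) (J : Fin (Fintype.card α)) :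
    #{x | π x < J} = J := by
  rw [← Fin.card_Iio, ← filter_gt_eq_Iio]
  exact card_equiv π (by simp)

variable [DecidableEq α]

def prefixBlock (i : α) (U : Finset α) (x : α) : Ordering :=
  if x ∈ U then .lt else if x = i then .eq else .gt

theorem forall_compare_eq_prefixBlock_iff {i : α} {U : Finset α} (hiU : i ∉ U)
    (π : α ≃ Fin (Fintype.card α)) (J : Fin (Fintype.card α)) :
    (∀ x, compare (π x) J = prefixBlock i U x) ↔
      π i = J ∧ ({x | π x < π i} : Finset α) = U := by
  constructor
  · intro h
    have hi : π i = J := compare_eq_iff_eq.mp (by simpa [prefixBlock, hiU] using h i)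
    refine ⟨hi, ?_⟩
    ext x
    rw [mem_filter, hi, ← compare_lt_iff_lt, h x]
    by_cases x ∈ U <;> by_cases x = i <;> simp_all [prefixBlock]
  · rintro ⟨rfl, rfl⟩ x
    rcases lt_trichotomy (π x) (π i) with hx | hx | hx
    · simp [prefixBlock, hx, compare_lt_iff_lt]
    · simp [prefixBlock, π.injective hx]
    · have hxi : x ≠ i := by rintro rfl; exact hx.false
      simp [prefixBlock, hx, hx.not_gt, hxi, compare_gt_iff_gt]

theorem card_equiv_fin_apply_eq_and_filter_lt (i : α) (J : Fin (Fintype.card α))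
    {U : Finset α} (hiU : i ∉ U) (hU : #U = J) :
    #{π : α ≃ Fin (Fintype.card α) | π i = J ∧ ({x | π x < π i} : Finset α) = U} =
      (J : ℕ).factorial * (Fintype.card α - 1 - J).factorial := by
  have hlt : Fintype.card {x // prefixBlock i U x = .lt} = J := by
    rw [Fintype.card_subtype, ← hU]
    congr 1; ext x; by_cases x ∈ U <;> by_cases x = i <;> simp_all [prefixBlock]
  have heq : Fintype.card {x // prefixBlock i U x = .eq} = 1 := by
    rw [Fintype.card_subtype, card_eq_one]
    exact ⟨i, by ext x; by_cases x ∈ U <;> by_cases x = i <;> simp_all [prefixBlock]⟩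
  have hgt : Fintype.card {x // prefixBlock i U x = .gt} = Fintype.card α - 1 - J := by
    have : ({x | prefixBlock i U x = .gt} : Finset α) = univ \ insert i U := by
      ext x; by_cases x ∈ U <;> by_cases x = i <;> simp_all [prefixBlock]
    rw [Fintype.card_subtype, this, card_sdiff_of_subset (subset_univ _),
      card_insert_of_notMem hiU, card_univ, hU]
    omega
  simp_rw [← forall_compare_eq_prefixBlock_iff hiU _ J]
  rw [← Fintype.card_subtype, Fintype.card_equiv_comp_eq (g := (compare · J)),
    Ordering.prod_univ, hlt, heq, hgt, Nat.factorial_one, mul_one]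
  rintro (_ | _ | _) <;>
    simp [hlt, heq, hgt, Fintype.card_subtype, compare_lt_iff_lt, compare_gt_iff_gt,
      filter_gt_eq_Iio, filter_lt_eq_Ioi]

theorem sum_equiv_fin_ite_apply_eq {M : Type*} [AddCommMonoid M] (i : α)
    (J : Fin (Fintype.card α)) (G : Finset α → M) :
    ∑ π : α ≃ Fin (Fintype.card α), (if π i = J then G {x | π x < π i} else 0) =
      ((J : ℕ).factorial * (Fintype.card α - 1 - J).factorial) •
        ∑ U ∈ (univ.erase i).powersetCard J, G U := by
  rw [← sum_filter, smul_sum]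
  have hmaps : ∀ π ∈ ({π | π i = J} : Finset (α ≃ Fin (Fintype.card α))),
      ({x | π x < π i} : Finset α) ∈ (univ.erase i).powersetCard J := by
    intro π hπ
    have hπJ : π i = J := (mem_filter.mp hπ).2
    rw [hπJ, mem_powersetCard]
    refine ⟨fun x hx => mem_erase.mpr ⟨?_, mem_univ x⟩, card_filter_apply_lt π J⟩
    rintro rfl
    exact (mem_filter.mp hx).2.ne hπJ
  rw [← sum_fiberwise_of_maps_to hmaps]
  refine sum_congr rfl fun U hU => ?_
  obtain ⟨hUi, hUJ⟩ := mem_powersetCard.mp hU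
  have hiU : i ∉ U := fun hi => by simpa using hUi hi
  rw [filter_filter, ← card_equiv_fin_apply_eq_and_filter_lt i J hiU hUJ, ← sum_const]
  exact sum_congr rfl fun π hπ => by rw [(mem_filter.mp hπ).2.2]

theorem sum_equiv_fin_ite_div_factorial {K : Type*} [Field K] [CharZero K] (i : α) {j : ℕ}
    (hj : j < Fintype.card α) (G : Finset α → K) :
    (∑ π : α ≃ Fin (Fintype.card α), if (π i : ℕ) = j then G {x | π x < π i} else 0) /
        (Fintype.card α).factorial =
      1 / (Fintype.card α : K) * ((Fintype.card α - 1).choose j : K)⁻¹ *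
        ∑ U ∈ (univ.erase i).powersetCard j, G U := by
  have hpos : ∀ π : α ≃ Fin (Fintype.card α), (π i : ℕ) = j ↔ π i = ⟨j, hj⟩ :=
    fun π => by rw [Fin.ext_iff]
  simp only [hpos]
  rw [sum_equiv_fin_ite_apply_eq, nsmul_eq_mul, mul_div_right_comm,
    Nat.cast_factorial_mul_factorial_div_factorial hj]

end Positions

section Subsets

variable {α : Type*} [DecidableEq α] {s : Finset α} {p : α → Prop} [DecidablePred p]

theorem filter_union_of_subset_filter {A B : Finset α} (hA : A ⊆ s.filter p)
    (hB : B ⊆ s.filter (¬ p ·)) : (A ∪ B).filter p = A ∧ (A ∪ B).filter (¬ p ·) = B := by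
  constructor <;> ext x <;> have := @hA x <;> have := @hB x <;>
    simp only [mem_filter, mem_union] at * <;> tauto

variable (s p)

theorem card_filter_powersetCard_card_filter_eq {r a : ℕ} (ha : a ≤ r) :
    #{U ∈ s.powersetCard r | #{x ∈ U | p x} = a} =
      (#{x ∈ s | p x}).choose a * (#s - #{x ∈ s | p x}).choose (r - a) := by
  have hnot : #s - #{x ∈ s | p x} = #{x ∈ s | ¬ p x} := by
    have := card_filter_add_card_filter_not (s := s) (fun x => p x)
    omega
  rw [hnot, ← card_powersetCard, ← card_powersetCard, ← card_product]
  refine card_nbij' (fun U => (U.filter p, U.filter (¬ p ·))) (fun V => V.1 ∪ V.2)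
    ?_ ?_ (fun U _ => filter_union_filter_not_eq p U) ?_
  · intro U hU
    simp only [coe_filter, mem_powersetCard, Set.mem_ofPred_eq, coe_product, Set.mem_prod,
      mem_coe] at hU ⊢
    obtain ⟨⟨hUs, hUr⟩, hUa⟩ := hU
    have := card_filter_add_card_filter_not (s := U) (fun x => p x)
    refine ⟨⟨filter_subset_filter _ hUs, hUa⟩, filter_subset_filter _ hUs, ?_⟩
    omega
  · rintro ⟨A, B⟩ hV
    simp only [mem_powersetCard, coe_product, Set.mem_prod, mem_coe] at hV
    obtain ⟨⟨hA, hAa⟩, hB, hBr⟩ := hV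
    simp only [coe_filter, mem_powersetCard, Set.mem_ofPred_eq]
    refine ⟨⟨union_subset (hA.trans (filter_subset _ _)) (hB.trans (filter_subset _ _)), ?_⟩,
      by rw [(filter_union_of_subset_filter hA hB).1, hAa]⟩
    rw [card_union_of_disjoint (disjoint_filter_filter_not s s p |>.mono hA hB)]
    omega
  · rintro ⟨A, B⟩ hV
    simp only [mem_powersetCard, coe_product, Set.mem_prod, mem_coe] at hV
    simp [filter_union_of_subset_filter hV.1.1 hV.2.1]

theorem sum_powersetCard_eq_sum_range_choose_mul_choose {M : Type*} [AddCommMonoid M] (r : ℕ)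
    (h : ℕ → M) :
    ∑ U ∈ s.powersetCard r, h #{x ∈ U | p x} =
      ∑ a ∈ range (r + 1),
        ((#{x ∈ s | p x}).choose a * (#s - #{x ∈ s | p x}).choose (r - a)) • h a := by
  have hmaps : ∀ U ∈ s.powersetCard r, #{x ∈ U | p x} ∈ range (r + 1) := fun U hU =>
    mem_range_succ_iff.mpr ((card_filter_le U p).trans (mem_powersetCard.mp hU).2.le)
  rw [← sum_fiberwise_of_maps_to hmaps]
  refine sum_congr rfl fun a ha => ?_
  rw [← card_filter_powersetCard_card_filter_eq s p (mem_range_succ_iff.mp ha), ← sum_const]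
  exact sum_congr rfl fun U hU => by rw [(mem_filter.mp hU).2]

end Subsets

/-- Lemma 5: the contribution to the Shapley value of example `i` from being the `k`-th
element of a permutation (creating a `k`-nn classification).  The left side is the
expectation, over uniformly random permutations, of the marginal value restricted to the
event that `i` is in position `k`; `A = {x ≠ i | lab x = y}`. -/
theorem stmt9 {α : Type*} [Fintype α] [DecidableEq α] (i : α) (lab : α → Bool) (y : Bool)
    (k : ℕ) (hk : Odd k) (hkn : k ≤ Fintype.card α) (vn vc vw : ℝ) :
    (∑ π : α ≃ Fin (Fintype.card α),
        if (π i : ℕ) = k - 1 then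
          ((if k < 2 * (((Finset.univ.filter (fun x => π x < π i)).filter
                (fun x => lab x = y)).card + (if lab i = y then 1 else 0))
            then vc else vw) - vn)
        else 0) / (Fintype.card α).factorial =
    (1 / (Fintype.card α : ℝ)) * ((Fintype.card α - 1).choose (k - 1) : ℝ)⁻¹ *
      (∑ a ∈ Finset.range k,
        (if a + (if lab i = y then 1 else 0) ≤ (k - 1) / 2 then vw else vc) *
          ((Finset.univ.filter (fun x => x ≠ i ∧ lab x = y)).card.choose a : ℝ) *
          ((Fintype.card α - 1 -
              (Finset.univ.filter (fun x => x ≠ i ∧ lab x = y)).card).choose (k - 1 - a) : ℝ)) -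
    vn / (Fintype.card α : ℝ) := by
  have hk1 : 1 ≤ k := hk.pos
  set b := if lab i = y then 1 else 0
  set vote : ℕ → ℝ := fun s => if k < 2 * (s + b) then vc else vw
  have hvote : ∀ a, vote a = if a + b ≤ (k - 1) / 2 then vw else vc := fun a => by
    simp only [vote, Nat.lt_two_mul_iff_not_le_div_two hk, ite_not]
  have hA : ({x | x ≠ i ∧ lab x = y} : Finset α) = {x ∈ univ.erase i | lab x = y} := by
    ext x; simp [and_comm]
  have hC : ((Fintype.card α - 1).choose (k - 1) : ℝ) ≠ 0 := by
    exact_mod_cast (Nat.choose_pos (by omega)).ne'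
  have hn : (Fintype.card α : ℝ) ≠ 0 := by exact_mod_cast (by omega : Fintype.card α ≠ 0)
  rw [sum_equiv_fin_ite_div_factorial i (j := k - 1) (by omega)
      (fun U => vote #{x ∈ U | lab x = y} - vn),
    sum_sub_distrib, sum_const, card_powersetCard,
    sum_powersetCard_eq_sum_range_choose_mul_choose _ (fun x => lab x = y),
    card_erase_of_mem (mem_univ i), card_univ, ← hA, Nat.sub_add_cancel hk1, mul_sub, nsmul_eq_mul]
  congr 1
  · congr 1
    refine sum_congr rfl fun a _ => ?_
    rw [hvote, nsmul_eq_mul]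
    push_cast
    ring
  · field_simp
end

section
/- Let A, B be disjoint finite sets, j and i two further distinct elements not in A ∪ B, and k an odd positive integer. The probability, over a uniformly random permutation of A ∪ B ∪ {j, i}, that exactly (k−1)/2 elements of A, exactly (k−1)/2 elements of B, and the element j all precede i, equals (1/(|A|+|B|+2)) · C(|A|+|B|+1, k)⁻¹ · C(|A|, (k−1)/2) · C(|B|, (k−1)/2). -/
/-!
The event depends on `π` only through the set `D` of elements preceding `i`: it says that `D`
contains `j` and meets each of `A`, `B` in `m = (k - 1) / 2` elements, so `|D| = k`. The
permutations with a given predecessor set `D ∌ i` of size `k` are those sending `D` onto the first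
`k` positions, `i` to position `k` and the rest after it, so there are `k! (n - 1 - k)!` of them.
There are `C(|A|, m) C(|B|, m)` admissible sets `D`, and `n! = n C(n - 1, k) k! (n - 1 - k)!`.
-/

open Finset Nat

def Equiv.subtypeEquivOverEquivPi {α β γ : Type*} (f : α → γ) (g : β → γ) :
    {e : α ≃ β // ∀ a, g (e a) = f a} ≃ ∀ c, {a // f a = c} ≃ {b // g b = c} where
  toFun e c := e.1.subtypeEquiv fun a => by rw [e.2 a]
  invFun E := ⟨Equiv.ofFiberEquiv E, Equiv.ofFiberEquiv_map E⟩
  left_inv e := rfl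
  right_inv E := by
    funext c
    ext ⟨a, rfl⟩
    rfl

theorem Fintype.card_equiv_over {α β γ : Type*} [Fintype α] [Fintype β] [Fintype γ]
    [DecidableEq α] [DecidableEq β] [DecidableEq γ] (f : α → γ) (g : β → γ)
    (h : ∀ c, card {a // f a = c} = card {b // g b = c}) :
    card {e : α ≃ β // ∀ a, g (e a) = f a} = ∏ c, (card {a // f a = c})! := by
  rw [card_congr (Equiv.subtypeEquivOverEquivPi f g), card_pi]
  exact Fintype.prod_congr _ _ fun c => card_equiv (equivOfCardEq (h c))

def cutOrdering {α : Type*} [DecidableEq α] (D : Finset α) (i x : α) : Ordering :=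
  if x ∈ D then .lt else if x = i then .eq else .gt

theorem cutOrdering_eq_lt_iff {α : Type*} [DecidableEq α] {D : Finset α} {i x : α} :
    cutOrdering D i x = .lt ↔ x ∈ D := by
  simp only [cutOrdering]
  split_ifs <;> simp_all

section Preceding

variable {α : Type*} [Fintype α] {n : ℕ}

def preceding (π : α ≃ Fin n) (i : α) : Finset α :=
  univ.filter fun x => π x < π i

@[simp]
theorem mem_preceding {π : α ≃ Fin n} {i x : α} : x ∈ preceding π i ↔ π x < π i := by
  simp [preceding]

theorem inter_preceding [DecidableEq α] (A : Finset α) (π : α ≃ Fin n) (i : α) :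
    A ∩ preceding π i = A.filter fun x => π x < π i := by
  ext; simp

theorem card_preceding (π : α ≃ Fin n) (i : α) : #(preceding π i) = π i := by
  rw [card_equiv π (t := Iio (π i)) (by simp), Fin.card_Iio]

variable [DecidableEq α] {D : Finset α} {i : α}

theorem preceding_eq_iff (hi : i ∉ D) (π : α ≃ Fin (Fintype.card α)) :
    preceding π i = D ↔
      ∀ x, compare (π x) ⟨#D, card_lt_univ_of_notMem hi⟩ = cutOrdering D i x := by
  constructor
  · rintro rfl x
    have hπi : π i = ⟨_, card_lt_univ_of_notMem hi⟩ := Fin.ext (card_preceding π i).symm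
    simp only [cutOrdering, mem_preceding, ← hπi]
    split_ifs with hx hxi
    · exact compare_lt_iff_lt.2 hx
    · exact compare_eq_iff_eq.2 (congrArg π hxi)
    · exact compare_gt_iff_gt.2 (lt_of_le_of_ne (not_lt.1 hx) (π.injective.ne (Ne.symm hxi)))
  · intro h
    have hπi : π i = ⟨#D, card_lt_univ_of_notMem hi⟩ :=
      compare_eq_iff_eq.1 (by simp [h, cutOrdering, hi])
    ext x
    rw [mem_preceding, hπi, ← compare_lt_iff_lt, h, cutOrdering_eq_lt_iff]

theorem card_cutOrdering_fiber (hi : i ∉ D) (c : Ordering) :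
    Fintype.card {x // cutOrdering D i x = c} =
      Fintype.card {y : Fin (Fintype.card α) // compare y ⟨#D, card_lt_univ_of_notMem hi⟩ = c} := by
  simp only [Fintype.card_subtype]
  cases c
  · simp [cutOrdering_eq_lt_iff, compare_lt_iff_lt, filter_gt_eq_Iio]
  · have : ({x | cutOrdering D i x = .eq} : Finset α) = {i} := by
      ext x
      rw [mem_filter_univ, mem_singleton, cutOrdering]
      split_ifs <;> grind
    simp [this, filter_eq']
  · have : ({x | cutOrdering D i x = .gt} : Finset α) = (insert i D)ᶜ := by
      ext x
      rw [mem_filter_univ, mem_compl, mem_insert, cutOrdering]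
      split_ifs <;> grind
    rw [this, card_compl, card_insert_of_notMem hi]
    simp [compare_gt_iff_gt, filter_lt_eq_Ioi]
    omega

theorem card_preceding_eq (hi : i ∉ D) :
    Nat.card {π : α ≃ Fin (Fintype.card α) // preceding π i = D} =
      (#D)! * (Fintype.card α - 1 - #D)! := by
  rw [Nat.card_congr (Equiv.subtypeEquivRight (preceding_eq_iff hi)), Nat.card_eq_fintype_card,
    Fintype.card_equiv_over _ _ (card_cutOrdering_fiber hi)]
  simp only [card_cutOrdering_fiber hi, Fintype.card_subtype]
  have : (univ : Finset Ordering) = {.lt, .eq, .gt} := rfl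
  simp [this, compare_lt_iff_lt, compare_gt_iff_gt, filter_gt_eq_Iio, filter_lt_eq_Ioi, filter_eq']

theorem card_preceding_mem (P : Finset α → Prop) {k : ℕ} (hP : ∀ D, P D → i ∉ D ∧ #D = k) :
    Nat.card {π : α ≃ Fin (Fintype.card α) // P (preceding π i)} =
      Nat.card {D // P D} * (k ! * (Fintype.card α - 1 - k)!) := by
  classical
  rw [← Nat.card_congr (Equiv.sigmaSubtypeFiberEquivSubtype (preceding · i) fun _ => Iff.rfl),
    Nat.card_sigma, Nat.card_eq_fintype_card (α := {D // P D}),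
    ← Finset.card_univ (α := {D // P D})]
  refine sum_const_nat fun ⟨D, hD⟩ _ => ?_
  obtain ⟨hi, rfl⟩ := hP D hD
  exact card_preceding_eq hi

end Preceding

theorem Finset.inter_insert_union_eq_left {α : Type*} [DecidableEq α] {A B S U : Finset α} {j : α}
    (hAB : Disjoint A B) (hjA : j ∉ A) (hSA : S ⊆ A) (hUB : U ⊆ B) :
    A ∩ insert j (S ∪ U) = S := by
  ext x
  have := hAB.notMem_of_mem_left_finset (a := x)
  grind

section Partition

variable {α : Type*} [Fintype α] [DecidableEq α] {A B : Finset α} {i j : α}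

theorem eq_or_eq_or_mem_or_mem_of_union_eq_univ (hcover : A ∪ B ∪ {j, i} = univ) (x : α) :
    x = j ∨ x = i ∨ x ∈ A ∨ x ∈ B := by
  have := hcover ▸ mem_univ x
  simpa [or_assoc] using this

theorem card_eq_card_inter_add_card_inter_add_one {D : Finset α} (hAB : Disjoint A B)
    (hjA : j ∉ A) (hjB : j ∉ B) (hcover : A ∪ B ∪ {j, i} = univ) (hiD : i ∉ D) (hjD : j ∈ D) :
    #D = #(A ∩ D) + #(B ∩ D) + 1 := by
  have hD : D = insert j (A ∩ D ∪ B ∩ D) := by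
    ext x
    have := eq_or_eq_or_mem_or_mem_of_union_eq_univ hcover x
    grind
  rw [congrArg card hD, card_insert_of_notMem (by simp [hjA, hjB]),
    card_union_of_disjoint (hAB.mono inter_subset_left inter_subset_left)]

theorem card_sets_inter_card_eq_choose_mul_choose (hAB : Disjoint A B) (hiA : i ∉ A)
    (hiB : i ∉ B) (hjA : j ∉ A) (hjB : j ∉ B) (hij : i ≠ j) (hcover : A ∪ B ∪ {j, i} = univ)
    (p q : ℕ) :
    Nat.card {D : Finset α // i ∉ D ∧ #(A ∩ D) = p ∧ #(B ∩ D) = q ∧ j ∈ D} =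
      (#A).choose p * (#B).choose q := by
  rw [Nat.card_eq_fintype_card, Fintype.card_subtype, ← card_powersetCard p A,
    ← card_powersetCard q B, ← card_product]
  have hinter {S U : Finset α} (hSA : S ⊆ A) (hUB : U ⊆ B) :
      (A ∩ insert j (S ∪ U), B ∩ insert j (S ∪ U)) = (S, U) := by
    rw [inter_insert_union_eq_left hAB hjA hSA hUB, union_comm,
      inter_insert_union_eq_left hAB.symm hjB hUB hSA]
  refine card_nbij' (fun D => (A ∩ D, B ∩ D)) (fun SU => insert j (SU.1 ∪ SU.2)) ?_ ?_ ?_ ?_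
  · intro D hD
    simp only [coe_filter, mem_univ, true_and, Set.mem_ofPred_eq] at hD
    simp [mem_powersetCard, hD]
  · rintro ⟨S, U⟩ hSU
    simp only [coe_product, Set.mem_prod, mem_coe, mem_powersetCard] at hSU
    obtain ⟨⟨hSA, rfl⟩, ⟨hUB, rfl⟩⟩ := hSU
    obtain ⟨hS, hU⟩ := Prod.mk.inj (hinter hSA hUB)
    simp only [coe_filter, mem_univ, true_and, Set.mem_ofPred_eq, hS, hU]
    grind
  · intro D hD
    simp only [coe_filter, mem_univ, true_and, Set.mem_ofPred_eq] at hD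
    ext x
    have := eq_or_eq_or_mem_or_mem_of_union_eq_univ hcover x
    grind
  · rintro ⟨S, U⟩ hSU
    simp only [coe_product, Set.mem_prod, mem_coe, mem_powersetCard] at hSU
    exact hinter hSU.1.1 hSU.2.1

end Partition

theorem cast_mul_factorial_div_factorial_succ (N k c : ℕ) (hc : N < k → c = 0) :
    ((c * (k ! * (N - k)!) : ℕ) : ℝ) / (N + 1)! = 1 / (N + 1) * (N.choose k : ℝ)⁻¹ * c := by
  rcases le_or_gt k N with hk | hk
  · rw [factorial_succ, ← choose_mul_factorial_mul_factorial hk]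
    have := (choose_pos hk).ne'
    push_cast
    field_simp
  · simp [hc hk]

theorem stmt10_general {α : Type*} [Fintype α] [DecidableEq α] (A B : Finset α) (i j : α)
    (hAB : Disjoint A B) (hiA : i ∉ A) (hiB : i ∉ B) (hjA : j ∉ A) (hjB : j ∉ B)
    (hij : i ≠ j) (hcover : A ∪ B ∪ {j, i} = Finset.univ)
    (k : ℕ) (hk : Odd k) :
    (Nat.card {π : α ≃ Fin (Fintype.card α) //
        (A.filter (fun x => π x < π i)).card = (k - 1) / 2 ∧
        (B.filter (fun x => π x < π i)).card = (k - 1) / 2 ∧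
        π j < π i} : ℝ) / (Fintype.card α).factorial =
    (1 / ((A.card : ℝ) + (B.card : ℝ) + 2)) * ((A.card + B.card + 1).choose k : ℝ)⁻¹ *
      (A.card.choose ((k - 1) / 2) : ℝ) * (B.card.choose ((k - 1) / 2) : ℝ) := by
  obtain ⟨m, rfl⟩ := hk
  have hm : (2 * m + 1 - 1) / 2 = m := by omega
  have hn : Fintype.card α = #A + #B + 1 + 1 := by
    rw [← Finset.card_univ, ← hcover, card_union_of_disjoint (by simp [hiA, hiB, hjA, hjB]),
      card_union_of_disjoint hAB, card_pair hij.symm]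
  let P (D : Finset α) : Prop := i ∉ D ∧ #(A ∩ D) = m ∧ #(B ∩ D) = m ∧ j ∈ D
  have hP (π : α ≃ Fin (Fintype.card α)) :
      (#(A.filter fun x => π x < π i) = m ∧ #(B.filter fun x => π x < π i) = m ∧ π j < π i) ↔
        P (preceding π i) := by
    simp [P, inter_preceding]
  have hPcard (D : Finset α) : P D → i ∉ D ∧ #D = 2 * m + 1 := fun ⟨hiD, hA, hB, hjD⟩ =>
    ⟨hiD, by rw [card_eq_card_inter_add_card_inter_add_one hAB hjA hjB hcover hiD hjD, hA, hB, two_mul]⟩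
  rw [hm, Nat.card_congr (Equiv.subtypeEquivRight hP), card_preceding_mem P hPcard,
    card_sets_inter_card_eq_choose_mul_choose hAB hiA hiB hjA hjB hij hcover, hn,
    add_tsub_cancel_right, cast_mul_factorial_div_factorial_succ]
  · push_cast
    ring
  · intro hlt
    obtain hA | hB : #A < m ∨ #B < m := by omega
    · simp [choose_eq_zero_of_lt hA]
    · simp [choose_eq_zero_of_lt hB]

/-- The probability, over a uniformly random permutation of `A ∪ B ∪ {j, i}`, that exactly
`(k−1)/2` elements of `A`, exactly `(k−1)/2` elements of `B`, and the element `j` all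
precede `i`, equals `(1/(|A|+|B|+2))·C(|A|+|B|+1,k)⁻¹·C(|A|,(k−1)/2)·C(|B|,(k−1)/2)`. -/
theorem stmt10 {α : Type*} [Fintype α] [DecidableEq α] (A B : Finset α) (i j : α)
    (hAB : Disjoint A B) (hiA : i ∉ A) (hiB : i ∉ B) (hjA : j ∉ A) (hjB : j ∉ B)
    (hij : i ≠ j) (hcover : A ∪ B ∪ {j, i} = Finset.univ)
    (k : ℕ) (hk : Odd k) (hkpos : 0 < k) :
    (Nat.card {π : α ≃ Fin (Fintype.card α) //
        (A.filter (fun x => π x < π i)).card = (k - 1) / 2 ∧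
        (B.filter (fun x => π x < π i)).card = (k - 1) / 2 ∧
        π j < π i} : ℝ) / (Fintype.card α).factorial =
    (1 / ((A.card : ℝ) + (B.card : ℝ) + 2)) * ((A.card + B.card + 1).choose k : ℝ)⁻¹ *
      (A.card.choose ((k - 1) / 2) : ℝ) * (B.card.choose ((k - 1) / 2) : ℝ) :=
  stmt10_general A B i j hAB hiA hiB hjA hjB hij hcover k hk
end

section
/- If a characteristic function v on N = A ⊎ B ⊎ {i} depends only on the pair of counts (|S ∩ A|, |S ∩ B|, whether i ∈ S), then the Shapley value of player i equals Σ over pairs (a,b) with 0 ≤ a ≤ |A|, 0 ≤ b ≤ |B| of [ (1/n) C(n−1, a+b)⁻¹ C(|A|, a) C(|B|, b) ] · [ w(a, b, true) − w(a, b, false) ], where n = |N| and w(a, b, t) is the common value of v on coalitions with a elements of A, b elements of B, and i present iff t. Moreover, the weights (1/n) C(n−1, a+b)⁻¹ C(|A|, a) C(|B|, b) sum to 1 over all (a,b). -/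
/-!
Group the orderings of the players by the set `T` of predecessors of `i`. An ordering has
predecessor set `T` exactly when it sends `T`, `{i}` and the remaining players onto the
positions below, at and above `#T`, so `#T! * (n - 1 - #T)!` orderings do. The marginal
contribution of `i` to `T` depends only on `(#(T ∩ A), #(T ∩ B)) = (a, b)`, a pair realised by
`C(|A|, a) * C(|B|, b)` sets `T`, and `(a + b)! (n - 1 - (a + b))! / n! = (1/n) C(n - 1, a + b)⁻¹`.
The weights sum to one because they compute the Shapley value of `i` in the game
`S ↦ [i ∈ S]`, in which every marginal contribution of `i` is one.
-/

open Finset Nat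

theorem Fintype.card_equiv_comp_eq_of_card_fiber {α β ι : Type*} [Fintype α] [Fintype β] [Fintype ι]
    [DecidableEq α] [DecidableEq β] [DecidableEq ι] {f : α → ι} {g : β → ι} (m : ι → ℕ)
    (hf : ∀ c, Fintype.card {a // f a = c} = m c) (hg : ∀ c, Fintype.card {b // g b = c} = m c) :
    Fintype.card {e : α ≃ β // g ∘ e = f} = ∏ c, (m c)! := by
  let e₀ : α ≃ β := Equiv.ofFiberEquiv fun c => Fintype.equivOfCardEq ((hf c).trans (hg c).symm)
  have he₀ : g ∘ e₀ = f := funext (Equiv.ofFiberEquiv_map _)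
  let toStabilizer : {e : α ≃ β // g ∘ e = f} ≃ {σ : Equiv.Perm α // f ∘ σ = f} :=
    (Equiv.equivCongr (Equiv.refl α) e₀.symm).subtypeEquiv fun e => by
      rw [← he₀]; constructor <;> intro h <;> ext x <;> simpa using congrFun h x
  rw [Fintype.card_congr toStabilizer, DomMulAct.stabilizer_card]
  simp only [hf]

section Predecessors

variable {α : Type*} [Fintype α]

def predecessors {n : ℕ} (π : α ≃ Fin n) (i : α) : Finset α := univ.filter fun x => π x < π i

lemma card_predecessors {n : ℕ} (π : α ≃ Fin n) (i : α) : #(predecessors π i) = π i := by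
  have : predecessors π i = (Iio (π i)).map π.symm.toEmbedding := by
    ext x; simp [predecessors]
  rw [this, card_map, Fin.card_Iio]

lemma notMem_predecessors {n : ℕ} (π : α ≃ Fin n) (i : α) : i ∉ predecessors π i := by
  simp [predecessors]

def precedenceLabel [DecidableEq α] (T : Finset α) (i x : α) : Ordering :=
  if x ∈ T then .lt else if x = i then .eq else .gt

lemma predecessors_eq_iff [DecidableEq α] {n : ℕ} {T : Finset α} {i : α} (hiT : i ∉ T)
    (hT : #T < n) (π : α ≃ Fin n) :
    predecessors π i = T ↔ (fun m => compare m ⟨#T, hT⟩) ∘ π = precedenceLabel T i := by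
  constructor
  · rintro rfl
    have hi : π i = ⟨#(predecessors π i), hT⟩ := Fin.ext (card_predecessors π i).symm
    ext x
    rw [← hi]
    by_cases hx : x = i
    · simp [hx, precedenceLabel, notMem_predecessors]
    · have : π x ≠ π i := π.injective.ne hx
      simp only [Function.comp_apply, precedenceLabel, predecessors, mem_filter, mem_univ,
        true_and, hx, if_false]
      split_ifs with h
      · exact compare_lt_iff_lt.2 h
      · exact compare_gt_iff_gt.2 (lt_of_le_of_ne (not_lt.1 h) this.symm)
  · intro h
    have hi : π i = ⟨#T, hT⟩ := by
      simpa [precedenceLabel, hiT] using congrFun h i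
    ext x
    have := congrFun h x
    simp only [Function.comp_apply, precedenceLabel] at this
    simp only [predecessors, mem_filter, mem_univ, true_and, hi, ← compare_lt_iff_lt, this]
    split_ifs <;> simp_all

lemma card_compare_fiber {n : ℕ} (k : Fin n) :
    ∀ c, Fintype.card {m : Fin n // compare m k = c} =
      c.casesOn (k : ℕ) 1 (n - 1 - k) := by
  intro c
  cases c <;> simp [Fintype.card_subtype, compare_lt_iff_lt, compare_gt_iff_gt,
    filter_gt_eq_Iio, filter_lt_eq_Ioi]

lemma card_precedenceLabel_fiber [DecidableEq α] {T : Finset α} {i : α} (hiT : i ∉ T) :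
    ∀ c, Fintype.card {x // precedenceLabel T i x = c} =
      c.casesOn #T 1 (Fintype.card α - 1 - #T) := by
  intro c
  cases c
  · simp [Fintype.card_subtype, precedenceLabel]
  · simp [Fintype.card_subtype, precedenceLabel]
    rw [card_eq_one]
    exact ⟨i, by ext x; by_cases hx : x = i <;> simp [hx, hiT]⟩
  · have : ({x | x ∉ T ∧ x ≠ i} : Finset α) = (insert i T)ᶜ := by
      ext; simp [and_comm]
    simp [Fintype.card_subtype, precedenceLabel]
    rw [this, card_compl, card_insert_of_notMem hiT]
    omega

lemma card_predecessors_eq [DecidableEq α] {T : Finset α} {i : α} (hiT : i ∉ T) :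
    Fintype.card {π : α ≃ Fin (Fintype.card α) // predecessors π i = T} =
      (#T)! * (Fintype.card α - 1 - #T)! := by
  have hT : #T < Fintype.card α := by
    simpa [card_insert_of_notMem hiT] using card_le_univ (insert i T)
  rw [Fintype.card_congr (Equiv.subtypeEquivRight (predecessors_eq_iff hiT hT)),
    Fintype.card_equiv_comp_eq_of_card_fiber _ (card_precedenceLabel_fiber hiT)
      (card_compare_fiber ⟨#T, hT⟩), show (univ : Finset Ordering) = {.lt, .eq, .gt} from rfl]
  simp

theorem sum_predecessors_eq_sum_powerset [DecidableEq α] {M : Type*} [AddCommMonoid M] (i : α)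
    (F : Finset α → M) :
    ∑ π : α ≃ Fin (Fintype.card α), F (predecessors π i) =
      ∑ T ∈ (univ.erase i).powerset, ((#T)! * (Fintype.card α - 1 - #T)!) • F T := by
  rw [← sum_fiberwise_of_maps_to (g := (predecessors · i)) fun π _ => mem_powerset.2 fun x hx =>
    mem_erase.2 ⟨ne_of_mem_of_not_mem hx (notMem_predecessors π i), mem_univ x⟩]
  refine sum_congr rfl fun T hT => ?_
  have hiT : i ∉ T := fun h => (notMem_erase i univ) (mem_powerset.1 hT h)
  rw [sum_congr rfl fun π hπ => congrArg F (mem_filter.1 hπ).2, sum_const,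
    ← card_predecessors_eq hiT, Fintype.card_subtype]

end Predecessors

theorem Finset.sum_powerset_union_card_inter {α M : Type*} [DecidableEq α] [AddCommMonoid M]
    {A B : Finset α} (hAB : Disjoint A B) (ψ : ℕ → ℕ → M) :
    ∑ T ∈ (A ∪ B).powerset, ψ #(T ∩ A) #(T ∩ B) =
      ∑ a ∈ range (#A + 1), ∑ b ∈ range (#B + 1), ((#A).choose a * (#B).choose b) • ψ a b := by
  have split : ∑ T ∈ (A ∪ B).powerset, ψ #(T ∩ A) #(T ∩ B) =
      ∑ P ∈ A.powerset ×ˢ B.powerset, ψ #P.1 #P.2 := by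
    refine sum_nbij' (fun T => (T ∩ A, T ∩ B)) (fun P => P.1 ∪ P.2) ?_ ?_ ?_ ?_ fun _ _ => rfl
    · intro T _
      simp [inter_subset_right]
    · intro P hP
      simp only [mem_product, mem_powerset] at hP ⊢
      exact union_subset_union hP.1 hP.2
    · intro T hT
      simp only [mem_powerset] at hT
      simp [← inter_union_distrib_left, inter_eq_left.2 hT]
    · intro P hP
      simp only [mem_product, mem_powerset] at hP
      have h₁ : P.2 ∩ A = ∅ := disjoint_iff_inter_eq_empty.1 (hAB.symm.mono_left hP.2)
      have h₂ : P.1 ∩ B = ∅ := disjoint_iff_inter_eq_empty.1 (hAB.mono_left hP.1)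
      simp [union_inter_distrib_right, inter_eq_left.2 hP.1, inter_eq_left.2 hP.2, h₁, h₂]
  rw [split, sum_product]
  simp only [sum_powerset_apply_card (ψ _),
    sum_powerset_apply_card fun a => ∑ b ∈ range (#B + 1), (#B).choose b • ψ a b, smul_sum,
    mul_smul]

lemma factorial_mul_factorial_div_factorial {K : Type*} [Field K] [CharZero K] {n k : ℕ}
    (hk : k < n) :
    ((k ! * (n - 1 - k)! : ℕ) : K) / n ! = 1 / n * ((n - 1).choose k : K)⁻¹ := by
  have hn : (n ! : K) = n * (n - 1)! := by
    rw [← Nat.cast_mul, Nat.mul_factorial_pred (by omega)]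
  rw [Nat.cast_choose K (by omega : k ≤ n - 1), hn]
  have : (n : K) ≠ 0 := by exact_mod_cast (by omega : n ≠ 0)
  field_simp
  push_cast
  ring

theorem shapley_value_eq_sum_choose {α : Type*} [Fintype α] [DecidableEq α] (A B : Finset α) (i : α)
    (hAB : Disjoint A B) (hiA : i ∉ A) (hiB : i ∉ B) (hcover : A ∪ B ∪ {i} = univ)
    (v : Finset α → ℝ) (w : ℕ → ℕ → Bool → ℝ)
    (hv : ∀ S : Finset α, v S = w #(S ∩ A) #(S ∩ B) (decide (i ∈ S))) :
    (∑ π : α ≃ Fin (Fintype.card α), (v (predecessors π i ∪ {i}) - v (predecessors π i))) /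
        (Fintype.card α)! =
      ∑ a ∈ range (#A + 1), ∑ b ∈ range (#B + 1),
        (1 / (Fintype.card α : ℝ)) * ((Fintype.card α - 1).choose (a + b) : ℝ)⁻¹ *
          ((#A).choose a : ℝ) * ((#B).choose b : ℝ) * (w a b true - w a b false) := by
  have hiAB : i ∉ A ∪ B := by simp [hiA, hiB]
  have hn : Fintype.card α = #A + #B + 1 := by
    rw [← Finset.card_univ, ← hcover, card_union_of_disjoint (disjoint_singleton_right.2 hiAB),
      card_union_of_disjoint hAB, card_singleton]
  set n := Fintype.card α
  have herase : univ.erase i = A ∪ B := by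
    rw [← hcover, union_comm, ← insert_eq, erase_insert hiAB]
  have hmarginal : ∀ T ∈ (A ∪ B).powerset, ((#T)! * (n - 1 - #T)!) • (v (T ∪ {i}) - v T) =
      (((#(T ∩ A) + #(T ∩ B))! * (n - 1 - (#(T ∩ A) + #(T ∩ B)))! : ℕ) : ℝ) *
        (w #(T ∩ A) #(T ∩ B) true - w #(T ∩ A) #(T ∩ B) false) := by
    intro T hT
    have hTAB := mem_powerset.1 hT
    have hiT : i ∉ T := fun h => hiAB (hTAB h)
    have hcard : #T = #(T ∩ A) + #(T ∩ B) := by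
      rw [← card_union_of_disjoint (hAB.mono inter_subset_right inter_subset_right),
        ← inter_union_distrib_left, inter_eq_left.2 hTAB]
    have hA : (T ∪ {i}) ∩ A = T ∩ A := by
      rw [union_inter_distrib_right, singleton_inter_of_notMem hiA, union_empty]
    have hB : (T ∪ {i}) ∩ B = T ∩ B := by
      rw [union_inter_distrib_right, singleton_inter_of_notMem hiB, union_empty]
    rw [hv, hv, hA, hB, nsmul_eq_mul, ← hcard]
    simp [hiT]
  rw [sum_predecessors_eq_sum_powerset i (fun T => v (T ∪ {i}) - v T), herase,
    sum_congr rfl hmarginal,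
    sum_powerset_union_card_inter hAB fun a b =>
      (((a + b)! * (n - 1 - (a + b))! : ℕ) : ℝ) * (w a b true - w a b false),
    sum_div]
  refine sum_congr rfl fun a ha => ?_
  rw [sum_div]
  refine sum_congr rfl fun b hb => ?_
  rw [mem_range] at ha hb
  rw [← factorial_mul_factorial_div_factorial (by omega : a + b < n), nsmul_eq_mul]
  push_cast
  ring

/-- If `v` on `N = A ⊎ B ⊎ {i}` depends only on `(|S ∩ A|, |S ∩ B|, i ∈ S)` via `w`,
then the Shapley value of `i` equals the weighted sum of `w a b true − w a b false`
with weights `(1/n)·C(n−1,a+b)⁻¹·C(|A|,a)·C(|B|,b)`, and these weights sum to one. -/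
theorem stmt16 {α : Type*} [Fintype α] [DecidableEq α] (A B : Finset α) (i : α)
    (hAB : Disjoint A B) (hiA : i ∉ A) (hiB : i ∉ B)
    (hcover : A ∪ B ∪ {i} = Finset.univ)
    (v : Finset α → ℝ) (w : ℕ → ℕ → Bool → ℝ)
    (hv : ∀ S : Finset α, v S = w (S ∩ A).card (S ∩ B).card (decide (i ∈ S))) :
    ((∑ π : α ≃ Fin (Fintype.card α),
        (v (Finset.univ.filter (fun x => π x < π i) ∪ {i}) -
         v (Finset.univ.filter (fun x => π x < π i)))) /
      (Fintype.card α).factorial =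
      ∑ a ∈ Finset.range (A.card + 1), ∑ b ∈ Finset.range (B.card + 1),
        (1 / (Fintype.card α : ℝ)) * ((Fintype.card α - 1).choose (a + b) : ℝ)⁻¹ *
          (A.card.choose a : ℝ) * (B.card.choose b : ℝ) * (w a b true - w a b false)) ∧
    (∑ a ∈ Finset.range (A.card + 1), ∑ b ∈ Finset.range (B.card + 1),
        (1 / (Fintype.card α : ℝ)) * ((Fintype.card α - 1).choose (a + b) : ℝ)⁻¹ *
          (A.card.choose a : ℝ) * (B.card.choose b : ℝ)) = 1 := by
  refine ⟨shapley_value_eq_sum_choose A B i hAB hiA hiB hcover v w hv, ?_⟩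
  have hunanimity := shapley_value_eq_sum_choose A B i hAB hiA hiB hcover
    (fun S => if i ∈ S then 1 else 0) (fun _ _ t => if t then 1 else 0)
    (fun S => by by_cases h : i ∈ S <;> simp [h])
  simp only [mem_union, mem_singleton, or_true, if_true, notMem_predecessors, if_false,
    sub_zero, sum_const, Finset.card_univ, Fintype.card_equiv (Fintype.equivFin α), nsmul_one,
    div_self (Nat.cast_ne_zero.2 (factorial_ne_zero _) : ((Fintype.card α)! : ℝ) ≠ 0)]
    at hunanimity
  simpa using hunanimity.symm
end
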